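/- arXiv:1808.03901 — 7 statements merged into one kernel-verified Lean document; each statement's English description precedes it below -/
import Mathlib

section
/- For any fixed q ∈ (0,1), the function f(x) = x·q^{x-1}/(1 - q^x) is strictly monotonically decreasing on the interval [1, ∞). -/
open Finset Filter

/-- The q-integer [m:q] = (1-q^m)/(1-q). -/
noncomputable def qint (q : ℝ) (m : ℕ) : ℝ := (1 - q ^ m) / (1 - q)

/-- Tail of the multiple q-zeta value: sum over m₁ > ⋯ > m_d > n. -/
noncomputable def qZeta {d : ℕ} (q : ℝ) (k : Fin d → ℕ) (n : ℕ) : ℝ :=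
  ∑' m : {m : Fin d → ℕ // StrictAnti m ∧ ∀ i, n < m i},
    ∏ i, q ^ (m.1 i * (k i - 1)) / (qint q (m.1 i)) ^ (k i)

/-- The modified multiple q-zeta value ζ[k₁,…,k_d; r : q). -/
noncomputable def qZetaR {d : ℕ} (q : ℝ) (k : Fin d → ℕ) (r : ℕ) : ℝ :=
  ∑' m : {m : Fin (d + 1) → ℕ // StrictAnti m ∧ ∀ i, 0 < m i},
    (∏ i : Fin d, q ^ (m.1 i.castSucc * (k i - 1)) / (qint q (m.1 i.castSucc)) ^ (k i))
      / (m.1 (Fin.last d) : ℝ) ^ r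

/-- Multiple zeta value. -/
noncomputable def mzv {d : ℕ} (k : Fin d → ℕ) : ℝ :=
  ∑' m : {m : Fin d → ℕ // StrictAnti m ∧ ∀ i, 0 < m i},
    ∏ i, (1 : ℝ) / (m.1 i : ℝ) ^ (k i)

/-- Akhilesh's double tail of a multiple zeta value. -/
noncomputable def dtail {d : ℕ} (hd : 0 < d) (k : Fin d → ℕ) (p n : ℕ) : ℝ :=
  ∑' m : {m : Fin d → ℕ // StrictAnti m ∧ ∀ i, n < m i},
    ((Nat.choose (m.1 ⟨0, hd⟩ + p) p : ℝ))⁻¹ * ∏ i, (1 : ℝ) / (m.1 i : ℝ) ^ (k i)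


open Real Set

/-!
Writing `c = -log q > 0`, one has `x q^(x-1) / (1 - q^x) = (q · (e^(c x) - 1) / x)⁻¹`, and
`(e^(c x) - 1) / x` is, up to the factor `c`, the slope of the strictly convex function `exp`
between `0` and `c x`, hence strictly increasing for `x > 0`.
-/

theorem strictMonoOn_exp_sub_one_div : StrictMonoOn (fun x => (exp x - 1) / x) (Ioi 0) := by
  intro a ha b hb hab
  simpa using strictConvexOn_exp.secant_strict_mono (mem_univ 0) (mem_univ a) (mem_univ b)
    (ne_of_gt ha) (ne_of_gt hb) hab

theorem strictMonoOn_exp_mul_sub_one_div {c : ℝ} (hc : 0 < c) :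
    StrictMonoOn (fun x => (exp (c * x) - 1) / x) (Ioi 0) := by
  intro a ha b hb hab
  have h := strictMonoOn_exp_sub_one_div (mul_pos hc ha) (mul_pos hc hb)
    (mul_lt_mul_of_pos_left hab hc)
  simp only [div_mul_eq_div_div_swap] at h
  exact (div_lt_div_iff_of_pos_right hc).1 h

theorem mul_rpow_sub_one_div_one_sub_rpow {q : ℝ} (hq : 0 < q) (x : ℝ) :
    x * q ^ (x - 1) / (1 - q ^ x) = (q * ((exp (-log q * x) - 1) / x))⁻¹ := by
  rw [rpow_sub hq, rpow_one, rpow_def_of_pos hq, neg_mul, exp_neg]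
  have hE : 0 < exp (log q * x) := exp_pos _
  rw [show (exp (log q * x))⁻¹ - 1 = (1 - exp (log q * x)) / exp (log q * x) by field_simp]
  simp only [mul_div_assoc', div_div, inv_div]
  ring

theorem strictAntiOn_mul_rpow_sub_one_div_one_sub_rpow {q : ℝ} (hq₀ : 0 < q) (hq₁ : q < 1) :
    StrictAntiOn (fun x => x * q ^ (x - 1) / (1 - q ^ x)) (Ioi 0) := by
  have hc : 0 < -log q := neg_pos.2 (log_neg hq₀ hq₁)
  intro a ha b hb hab
  simp only [mul_rpow_sub_one_div_one_sub_rpow hq₀]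
  have hpos : 0 < (exp (-log q * a) - 1) / a :=
    div_pos (sub_pos.2 (one_lt_exp_iff.2 (mul_pos hc ha))) ha
  gcongr (q * ?_)⁻¹
  exact strictMonoOn_exp_mul_sub_one_div hc ha hb hab

theorem stmt2 (q : ℝ) (hq : q ∈ Set.Ioo (0:ℝ) 1) :
    StrictAntiOn (fun x : ℝ => x * q ^ (x - 1) / (1 - q ^ x)) (Set.Ici 1) :=
  (strictAntiOn_mul_rpow_sub_one_div_one_sub_rpow hq.1 hq.2).mono
    (Ici_subset_Ioi.2 zero_lt_one)
end

section
/- Let d, m₁, …, m_d, k be positive integers with m₁ ≥ m₂ ≥ ⋯ ≥ m_d and k ≥ d+1. Then the function f(q) = q^{m₁(k-1)} / ([m₁:q]^k · [m₂:q] ⋯ [m_d:q]) is strictly monotonically increasing on the interval (0,1). -/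
open Finset Filter

/-! `[n:q]² = q^(n-1)·[n:q][n:q⁻¹]`, and `[n:q][n:q⁻¹] = ∑_{s,t<n} q^(s-t)` is antitone on `(0,1)`
because it is a sum of terms `x + x⁻¹` with `x = q^|s-t|`. Hence the square of the function is
`q^N / D(q)` with `D` positive and antitone and `N = (m₁+1)(k-1) - ∑ (mᵢ-1)`, which is positive
because `mᵢ ≤ m₁` and `d ≤ k - 1`. -/

noncomputable def symQint (q : ℝ) (n : ℕ) : ℝ := qint q n * qint q⁻¹ n

lemma qint_eq_geom_sum {q : ℝ} (hq : q ≠ 1) (n : ℕ) : qint q n = ∑ i ∈ range n, q ^ i := by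
  rw [geom_sum_eq hq, qint, ← neg_div_neg_eq, neg_sub, neg_sub]

lemma qint_pos {q : ℝ} (hq : 0 ≤ q) (hq1 : q ≠ 1) {n : ℕ} (hn : n ≠ 0) : 0 < qint q n := by
  rw [qint_eq_geom_sum hq1]
  exact geom_sum_pos hq hn

lemma pow_mul_qint_inv {q : ℝ} (hq : q ≠ 0) (n : ℕ) : q ^ (n - 1) * qint q⁻¹ n = qint q n := by
  rcases eq_or_ne q 1 with rfl | hq1
  · simp [qint]
  rcases n with _ | n
  · simp [qint]
  have hq1' : 1 - q ≠ 0 := sub_ne_zero.mpr (Ne.symm hq1)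
  have hqinv : 1 - q⁻¹ ≠ 0 := sub_ne_zero.mpr (by simpa [eq_comm] using hq1)
  simp only [qint, Nat.add_sub_cancel, inv_pow]
  field_simp
  ring

lemma sq_qint {q : ℝ} (hq : q ≠ 0) (n : ℕ) : qint q n ^ 2 = q ^ (n - 1) * symQint q n := by
  rw [symQint, ← mul_assoc, mul_comm (q ^ _), mul_assoc, pow_mul_qint_inv hq, sq]

lemma add_inv_le_add_inv {x y : ℝ} (hx : 0 < x) (hxy : x ≤ y) (hy : y ≤ 1) :
    y + y⁻¹ ≤ x + x⁻¹ := by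
  have hy0 : 0 < y := hx.trans_le hxy
  have key : x + x⁻¹ - (y + y⁻¹) = (y - x) * (1 - x * y) / (x * y) := by
    field_simp; ring
  have : 0 ≤ (y - x) * (1 - x * y) / (x * y) :=
    div_nonneg (mul_nonneg (by linarith) (by nlinarith)) (by positivity)
  linarith

lemma pow_mul_inv_pow_add_le {p q : ℝ} (hp : 0 < p) (hpq : p ≤ q) (hq : q ≤ 1) (s t : ℕ) :
    q ^ s * q⁻¹ ^ t + q ^ t * q⁻¹ ^ s ≤ p ^ s * p⁻¹ ^ t + p ^ t * p⁻¹ ^ s := by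
  wlog hts : t ≤ s generalizing s t
  · rw [add_comm, add_comm (p ^ s * _)]
    exact this t s (by omega)
  obtain ⟨n, rfl⟩ := Nat.exists_eq_add_of_le hts
  have hq0 : 0 < q := hp.trans_le hpq
  have split (x : ℝ) (hx : x ≠ 0) :
      x ^ (t + n) * x⁻¹ ^ t + x ^ t * x⁻¹ ^ (t + n) = x ^ n + (x ^ n)⁻¹ := by
    simp only [inv_pow, pow_add]
    field_simp
  rw [split q hq0.ne', split p hp.ne']
  exact add_inv_le_add_inv (pow_pos hp n) (pow_le_pow_left₀ hp.le hpq n) (pow_le_one₀ hq0.le hq)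

lemma two_mul_symQint {q : ℝ} (hq1 : q ≠ 1) (n : ℕ) :
    2 * symQint q n = ∑ s ∈ range n, ∑ t ∈ range n, (q ^ s * q⁻¹ ^ t + q ^ t * q⁻¹ ^ s) := by
  have hq1' : q⁻¹ ≠ 1 := by simpa using hq1
  simp only [Finset.sum_add_distrib]
  rw [Finset.sum_comm (f := fun s t => q ^ t * q⁻¹ ^ s), ← Finset.sum_mul_sum, symQint,
    qint_eq_geom_sum hq1, qint_eq_geom_sum hq1']
  ring

lemma symQint_antitoneOn (n : ℕ) : AntitoneOn (symQint · n) (Set.Ioo 0 1) := by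
  intro p ⟨hp0, hp1⟩ q ⟨_, hq1⟩ hpq
  have h2 : 2 * symQint q n ≤ 2 * symQint p n := by
    rw [two_mul_symQint hq1.ne, two_mul_symQint hp1.ne]
    exact Finset.sum_le_sum fun s _ => Finset.sum_le_sum fun t _ =>
      pow_mul_inv_pow_add_le hp0 hpq hq1.le s t
  linarith

lemma symQint_pos {q : ℝ} (hq : q ∈ Set.Ioo 0 1) {n : ℕ} (hn : n ≠ 0) : 0 < symQint q n :=
  mul_pos (qint_pos hq.1.le hq.2.ne hn)
    (qint_pos (inv_nonneg.mpr hq.1.le) (by simpa using hq.2.ne) hn)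

lemma strictMonoOn_pow_div {s : Set ℝ} (hs : s ⊆ Set.Ici 0) {N : ℕ} (hN : N ≠ 0) {D : ℝ → ℝ}
    (hD : ∀ q ∈ s, 0 < D q) (hanti : AntitoneOn D s) :
    StrictMonoOn (fun q => q ^ N / D q) s := by
  intro p hp q hq hpq
  calc p ^ N / D p ≤ p ^ N / D q :=
        div_le_div_of_nonneg_left (pow_nonneg (hs hp) N) (hD q hq) (hanti hp hq hpq.le)
    _ < q ^ N / D q := div_lt_div_of_pos_right (pow_lt_pow_left₀ hpq (hs hp) hN) (hD q hq)

section Product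

variable {ι : Type*} (s : Finset ι) (m : ι → ℕ) (a e : ℕ)

lemma sq_qint_pow_mul_prod {q : ℝ} (hq : q ≠ 0) :
    (qint q a ^ e * ∏ i ∈ s, qint q (m i)) ^ 2 =
      q ^ ((a - 1) * e + ∑ i ∈ s, (m i - 1)) * (symQint q a ^ e * ∏ i ∈ s, symQint q (m i)) := by
  rw [mul_pow, ← pow_mul, mul_comm e 2, pow_mul, ← Finset.prod_pow]
  simp only [sq_qint hq, Finset.prod_mul_distrib, Finset.prod_pow_eq_pow_sum, mul_pow, pow_add,
    pow_mul]
  ring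

variable {a m}

lemma symQint_pow_mul_prod_pos (ha : a ≠ 0) (hm : ∀ i ∈ s, m i ≠ 0) {q : ℝ}
    (hq : q ∈ Set.Ioo 0 1) : 0 < symQint q a ^ e * ∏ i ∈ s, symQint q (m i) :=
  mul_pos (pow_pos (symQint_pos hq ha) e) (Finset.prod_pos fun i hi => symQint_pos hq (hm i hi))

lemma symQint_pow_mul_prod_antitoneOn (ha : a ≠ 0) (hm : ∀ i ∈ s, m i ≠ 0) :
    AntitoneOn (fun q => symQint q a ^ e * ∏ i ∈ s, symQint q (m i)) (Set.Ioo 0 1) := by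
  intro p hp q hq hpq
  exact mul_le_mul (pow_le_pow_left₀ (symQint_pos hq ha).le (symQint_antitoneOn a hp hq hpq) e)
    (Finset.prod_le_prod (fun i hi => (symQint_pos hq (hm i hi)).le)
      fun i _ => symQint_antitoneOn (m i) hp hq hpq)
    (Finset.prod_pos fun i hi => symQint_pos hq (hm i hi)).le (pow_pos (symQint_pos hp ha) e).le

end Product

lemma sub_one_mul_add_sum_sub_one_lt {ι : Type*} (s : Finset ι) (m : ι → ℕ) {a e : ℕ}
    (ha : 0 < a) (he : 0 < e) (hs : #s ≤ e) (hma : ∀ i ∈ s, m i ≤ a) :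
    (a - 1) * e + ∑ i ∈ s, (m i - 1) < 2 * (a * e) := by
  have hsum : ∑ i ∈ s, (m i - 1) ≤ e * (a - 1) :=
    calc ∑ i ∈ s, (m i - 1) ≤ #s * (a - 1) := by
          simpa using Finset.sum_le_sum fun i hi => Nat.sub_le_sub_right (hma i hi) 1
      _ ≤ e * (a - 1) := Nat.mul_le_mul_right _ hs
  obtain ⟨b, rfl⟩ := Nat.exists_eq_add_of_lt ha
  obtain ⟨f, rfl⟩ := Nat.exists_eq_add_of_lt he
  simp only [zero_add, Nat.add_sub_cancel] at hsum ⊢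
  nlinarith

theorem stmt3 (d : ℕ) (hd : 0 < d) (m : Fin d → ℕ) (hm : ∀ i, 0 < m i)
    (hmono : Antitone m) (k : ℕ) (hk : d + 1 ≤ k) :
    StrictMonoOn
      (fun q : ℝ => q ^ (m ⟨0, hd⟩ * (k - 1)) /
        ((qint q (m ⟨0, hd⟩)) ^ (k - 1) * ∏ i, qint q (m i)))
      (Set.Ioo 0 1) := by
  set a := m ⟨0, hd⟩
  have ha : a ≠ 0 := (hm _).ne'
  have hm0 : ∀ i ∈ univ, m i ≠ 0 := fun i _ => (hm i).ne'
  have hlt : (a - 1) * (k - 1) + ∑ i, (m i - 1) < 2 * (a * (k - 1)) :=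
    sub_one_mul_add_sum_sub_one_lt univ m (hm _) (by omega)
      (by simpa using Nat.le_sub_one_of_lt hk) fun i _ => hmono (Nat.zero_le _)
  obtain ⟨N, hN⟩ := Nat.exists_eq_add_of_lt hlt
  have hf_pos : ∀ q ∈ Set.Ioo (0 : ℝ) 1,
      0 < q ^ (a * (k - 1)) / (qint q a ^ (k - 1) * ∏ i, qint q (m i)) := fun q hq =>
    div_pos (pow_pos hq.1 _) (mul_pos (pow_pos (qint_pos hq.1.le hq.2.ne ha) _)
      (Finset.prod_pos fun i hi => qint_pos hq.1.le hq.2.ne (hm0 i hi)))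
  have hf_sq : ∀ q ∈ Set.Ioo (0 : ℝ) 1,
      (q ^ (a * (k - 1)) / (qint q a ^ (k - 1) * ∏ i, qint q (m i))) ^ 2 =
        q ^ (N + 1) / (symQint q a ^ (k - 1) * ∏ i, symQint q (m i)) := fun q hq => by
    rw [div_pow, sq_qint_pow_mul_prod _ _ _ _ hq.1.ne', ← pow_mul, mul_comm _ 2, hN, add_assoc,
      pow_add, mul_div_mul_left _ _ (pow_pos hq.1 _).ne']
  intro p hp q hq hpq
  rw [← pow_lt_pow_iff_left₀ (hf_pos p hp).le (hf_pos q hq).le two_ne_zero, hf_sq p hp, hf_sq q hq]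
  exact strictMonoOn_pow_div (fun x hx => hx.1.le) N.succ_ne_zero
    (fun x hx => symQint_pow_mul_prod_pos univ (k - 1) ha hm0 hx)
    (symQint_pow_mul_prod_antitoneOn univ (k - 1) ha hm0) hp hq hpq
end

section
/- For positive integers m and k with k ≥ 2, the function q ↦ q^{m(k-1)} / [m:q]^k is monotonically increasing on the interval (0,1). -/
open Finset Filter

/-!
Taking logarithms, `q ^ (m (k - 1)) / [m:q] ^ k` is increasing as soon as
`k · q [m:q]' ≤ m (k - 1) · [m:q]`. Now `q [m:q]' / [m:q] = ∑ i q^i / ∑ q^i` is the mean of `i`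
under the weights `q^i`, which decrease in `i` for `q ≤ 1`; by Chebyshev's sum inequality this
mean is at most the unweighted mean `(m - 1) / 2`, and `k (m - 1) / 2 ≤ m (k - 1)` for `k ≥ 2`.
-/

theorem monotoneOn_pow_div_pow_of_hasDerivAt {D : Set ℝ} (hD : Convex ℝ D) {g g' : ℝ → ℝ}
    {N k : ℕ} (hx : ∀ x ∈ D, 0 < x) (hg : ∀ x ∈ D, 0 < g x)
    (hg' : ∀ x ∈ D, HasDerivAt g (g' x) x) (hlogDeriv : ∀ x ∈ D, k * (x * g' x) ≤ N * g x) :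
    MonotoneOn (fun x => x ^ N / g x ^ k) D := by
  have hderiv : ∀ x ∈ D, HasDerivAt (fun x => N * Real.log x - k * Real.log (g x))
      (N * x⁻¹ - k * (g' x / g x)) x := fun x hxD =>
    ((Real.hasDerivAt_log (hx x hxD).ne').const_mul _).sub
      (((hg' x hxD).log (hg x hxD).ne').const_mul _)
  have hlog : MonotoneOn (fun x => N * Real.log x - k * Real.log (g x)) D := by
    refine monotoneOn_of_hasDerivWithinAt_nonneg hD
      (fun x hxD => (hderiv x hxD).continuousAt.continuousWithinAt)
      (fun x hxD => (hderiv x (interior_subset hxD)).hasDerivWithinAt) fun x hxD => ?_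
    have hxD := interior_subset hxD
    rw [sub_nonneg, ← div_eq_mul_inv, ← mul_div_assoc, div_le_div_iff₀ (hg x hxD) (hx x hxD)]
    linarith [hlogDeriv x hxD]
  refine (Real.exp_monotone.comp_monotoneOn hlog).congr fun x hxD => ?_
  simp only [Function.comp_apply]
  rw [Real.exp_sub, Real.exp_nat_mul, Real.exp_nat_mul, Real.exp_log (hx x hxD),
    Real.exp_log (hg x hxD)]

theorem qint_eq_sum_range_pow (m : ℕ) {q : ℝ} (hq : q ≠ 1) : qint q m = ∑ i ∈ range m, q ^ i := by
  rw [geom_sum_eq hq, qint, ← neg_div_neg_eq, neg_sub, neg_sub]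

theorem hasDerivAt_sum_range_pow (m : ℕ) (x : ℝ) :
    HasDerivAt (fun q => ∑ i ∈ range m, q ^ i) (∑ i ∈ range m, (i : ℝ) * x ^ (i - 1)) x :=
  HasDerivAt.fun_sum fun i _ => hasDerivAt_pow i x

theorem mul_sum_range_mul_pow_sub_one (m : ℕ) (x : ℝ) :
    x * ∑ i ∈ range m, (i : ℝ) * x ^ (i - 1) = ∑ i ∈ range m, (i : ℝ) * x ^ i := by
  rw [Finset.mul_sum]
  refine Finset.sum_congr rfl fun i _ => ?_
  rcases i with _ | i
  · simp
  · rw [Nat.add_sub_cancel, pow_succ]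
    ring

theorem two_mul_sum_range_mul_pow_le {x : ℝ} (hx₀ : 0 ≤ x) (hx₁ : x ≤ 1) (m : ℕ) :
    2 * ∑ i ∈ range m, (i : ℝ) * x ^ i ≤ (m - 1) * ∑ i ∈ range m, x ^ i := by
  rcases Nat.eq_zero_or_pos m with rfl | hm
  · simp
  have hchebyshev := ((Nat.mono_cast (α := ℝ)).antivary (pow_right_anti₀ hx₀ hx₁)).antivaryOn
    (range m : Set ℕ) |>.card_mul_sum_le_sum_mul_sum
  have hgauss : (∑ i ∈ range m, (i : ℝ)) * 2 = m * (m - 1) := by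
    have := congrArg (Nat.cast (R := ℝ)) (Finset.sum_range_id_mul_two m)
    push_cast [Nat.cast_sub hm] at this
    exact this
  rw [card_range] at hchebyshev
  refine le_of_mul_le_mul_left ?_ (Nat.cast_pos.2 hm : (0 : ℝ) < m)
  calc (m : ℝ) * (2 * ∑ i ∈ range m, (i : ℝ) * x ^ i)
      ≤ 2 * ((∑ i ∈ range m, (i : ℝ)) * ∑ i ∈ range m, x ^ i) := by linarith
    _ = m * ((m - 1) * ∑ i ∈ range m, x ^ i) := by rw [← mul_assoc, mul_comm 2, hgauss]; ring

theorem mul_sum_range_mul_pow_le {x : ℝ} (hx₀ : 0 ≤ x) (hx₁ : x ≤ 1) {k : ℕ} (hk : 2 ≤ k)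
    (m : ℕ) : k * ∑ i ∈ range m, (i : ℝ) * x ^ i ≤ (m * (k - 1) : ℕ) * ∑ i ∈ range m, x ^ i := by
  have hmean := two_mul_sum_range_mul_pow_le hx₀ hx₁ m
  have hS : 0 ≤ ∑ i ∈ range m, x ^ i := Finset.sum_nonneg fun i _ => pow_nonneg hx₀ i
  have hk' : (2 : ℝ) ≤ k := by exact_mod_cast hk
  push_cast [Nat.cast_sub (by omega : 1 ≤ k)]
  nlinarith [mul_nonneg (mul_nonneg (Nat.cast_nonneg m : (0 : ℝ) ≤ m) (sub_nonneg.2 hk')) hS]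

theorem stmt4 (m k : ℕ) (hm : 0 < m) (hk : 2 ≤ k) :
    MonotoneOn (fun q : ℝ => q ^ (m * (k - 1)) / (qint q m) ^ k) (Set.Ioo 0 1) := by
  have hS : ∀ x ∈ Set.Ioo (0 : ℝ) 1, 0 < ∑ i ∈ range m, x ^ i := fun x hx =>
    Finset.sum_pos (fun i _ => pow_pos hx.1 i) (nonempty_range_iff.2 hm.ne')
  have hlogDeriv : ∀ x ∈ Set.Ioo (0 : ℝ) 1,
      k * (x * ∑ i ∈ range m, (i : ℝ) * x ^ (i - 1)) ≤ (m * (k - 1) : ℕ) * ∑ i ∈ range m, x ^ i :=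
    fun x hx => by
      rw [mul_sum_range_mul_pow_sub_one]
      exact mul_sum_range_mul_pow_le hx.1.le hx.2.le hk m
  refine (monotoneOn_pow_div_pow_of_hasDerivAt (convex_Ioo 0 1) (fun x hx => hx.1) hS
    (fun x _ => hasDerivAt_sum_range_pow m x) hlogDeriv).congr fun q hq => ?_
  simp only [qint_eq_sum_range_pow m hq.2.ne]
end

section
/- For any nonnegative integer d and every q ∈ (0,1), ζ[2, {1}^{d+1} : q] < ζ[2, {1}^d : q], where {1}^d denotes d repeated entries equal to 1. -/
open Finset Filter

/-!
Write `ζ[2, {1}^e] = ∑ q^{m₀}/[m₀]² · ∏_{i ≥ 1} 1/[mᵢ]` and sum out the largest variable `m₀`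
for a fixed tail `m₁ > ⋯ > m_{e+1}`. Since `[n+1] = q[n] + 1`, the terms satisfy the strict
telescoping bound `q^{n+1}/[n+1]² < q^n/[n] - q^{n+1}/[n+1]`, so
`∑_{m₀ > m₁} q^{m₀}/[m₀]² < q^{m₁}/[m₁]`. Hence every fibre of `ζ[2, {1}^{e+1}]` sums to
strictly less than the corresponding term of `ζ[2, {1}^e]`; the same comparison also gives
summability, by induction on `e`.
-/

section QInt

variable {q : ℝ}

lemma qint_pos_s8 (hq0 : 0 < q) (hq1 : q < 1) {m : ℕ} (hm : 0 < m) : 0 < qint q m :=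
  div_pos (by linarith [pow_lt_one₀ hq0.le hq1 hm.ne']) (by linarith)

lemma qint_succ (hq1 : q < 1) (n : ℕ) : qint q (n + 1) = q * qint q n + 1 := by
  have : 1 - q ≠ 0 := by linarith
  unfold qint
  field_simp
  ring

lemma pow_div_qint_sq_succ_lt_sub (hq0 : 0 < q) (hq1 : q < 1) {n : ℕ} (hn : 0 < n) :
    q ^ (n + 1) / qint q (n + 1) ^ 2 < q ^ n / qint q n - q ^ (n + 1) / qint q (n + 1) := by
  have hQn := qint_pos_s8 hq0 hq1 hn
  have hQn1 := qint_pos_s8 hq0 hq1 n.succ_pos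
  have hsucc := qint_succ hq1 n
  have hsub : q ^ n / qint q n - q ^ (n + 1) / qint q (n + 1)
      = q ^ n / (qint q n * qint q (n + 1)) := by
    rw [div_sub_div _ _ hQn.ne' hQn1.ne', hsucc]
    ring
  rw [hsub, div_lt_div_iff₀ (by positivity) (by positivity)]
  have hqn := pow_pos hq0 n
  calc q ^ (n + 1) * (qint q n * qint q (n + 1))
      = (q * qint q n) * (q ^ n * qint q (n + 1)) := by ring
    _ < qint q (n + 1) * (q ^ n * qint q (n + 1)) := by gcongr; linarith
    _ = q ^ n * qint q (n + 1) ^ 2 := by ring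

lemma sum_range_pow_div_qint_sq_le (hq0 : 0 < q) (hq1 : q < 1) {n : ℕ} (hn : 0 < n) (N : ℕ) :
    ∑ k ∈ range N, q ^ (k + (n + 1)) / qint q (k + (n + 1)) ^ 2 ≤ q ^ n / qint q n := by
  have htele := sum_range_sub' (fun k => q ^ (k + n) / qint q (k + n)) N
  have hle : ∑ k ∈ range N, q ^ (k + (n + 1)) / qint q (k + (n + 1)) ^ 2
      ≤ ∑ k ∈ range N,
          (q ^ (k + n) / qint q (k + n) - q ^ (k + 1 + n) / qint q (k + 1 + n)) :=
    sum_le_sum fun k _ => by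
      simpa only [← add_assoc, add_right_comm k 1 n] using
        (pow_div_qint_sq_succ_lt_sub hq0 hq1 (n := k + n) (by omega)).le
  have hlast : 0 ≤ q ^ (N + n) / qint q (N + n) :=
    div_nonneg (pow_nonneg hq0.le _) (qint_pos_s8 hq0 hq1 (by omega)).le
  simp only [zero_add] at htele
  linarith

lemma summable_pow_div_qint_sq (hq0 : 0 < q) (hq1 : q < 1) (n : ℕ) :
    Summable fun k => q ^ (k + (n + 1)) / qint q (k + (n + 1)) ^ 2 := by
  have hpos : ∀ n, 0 < n → Summable fun k => q ^ (k + (n + 1)) / qint q (k + (n + 1)) ^ 2 :=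
    fun n hn => summable_of_sum_range_le (fun k => by positivity)
      (sum_range_pow_div_qint_sq_le hq0 hq1 hn)
  rcases Nat.eq_zero_or_pos n with rfl | hn
  · exact (summable_nat_add_iff 1).mp (hpos 1 one_pos)
  · exact hpos n hn

lemma tsum_pow_div_qint_sq_lt (hq0 : 0 < q) (hq1 : q < 1) {n : ℕ} (hn : 0 < n) :
    ∑' k, q ^ (k + (n + 1)) / qint q (k + (n + 1)) ^ 2 < q ^ n / qint q n := by
  rw [(summable_pow_div_qint_sq hq0 hq1 n).tsum_eq_zero_add]
  have hrest : ∑' k, q ^ (k + 1 + (n + 1)) / qint q (k + 1 + (n + 1)) ^ 2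
      ≤ q ^ (n + 1) / qint q (n + 1) := by
    have hidx : ∀ k, k + 1 + (n + 1) = k + (n + 1 + 1) := fun k => by omega
    simp only [hidx]
    exact (summable_pow_div_qint_sq hq0 hq1 (n + 1)).tsum_le_of_sum_range_le
      (sum_range_pow_div_qint_sq_le hq0 hq1 n.succ_pos)
  simp only [zero_add]
  linarith [pow_div_qint_sq_succ_lt_sub hq0 hq1 hn]

end QInt

section Fibrewise

variable {α β : Type*} {f : α × β → ℝ} {g : α → ℝ}

lemma summable_prod_of_tsum_le (hf : 0 ≤ f) (hfib : ∀ a, Summable fun b => f (a, b))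
    (hle : ∀ a, ∑' b, f (a, b) ≤ g a) (hg : Summable g) : Summable f :=
  (summable_prod_of_nonneg hf).mpr
    ⟨hfib, hg.of_nonneg_of_le (fun a => tsum_nonneg fun b => hf (a, b)) hle⟩

lemma tsum_prod_lt_of_tsum_lt [Nonempty α] (hf : 0 ≤ f)
    (hfib : ∀ a, Summable fun b => f (a, b))
    (hlt : ∀ a, ∑' b, f (a, b) < g a) (hg : Summable g) : ∑' x, f x < ∑' a, g a := by
  have hsum := summable_prod_of_tsum_le hf hfib (fun a => (hlt a).le) hg
  rw [hsum.tsum_prod' hfib]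
  exact Summable.tsum_lt_tsum (fun a => (hlt a).le) (hlt (Classical.arbitrary α))
    ((summable_prod_of_nonneg hf).mp hsum).2 hg

end Fibrewise

abbrev PosStrictAnti (d : ℕ) := {m : Fin d → ℕ // StrictAnti m ∧ ∀ i, 0 < m i}

instance (e : ℕ) : Nonempty (PosStrictAnti (e + 1)) :=
  ⟨⟨fun i => e + 1 - i, fun i _ h => Nat.sub_lt_sub_left i.2 h,
    fun i => Nat.sub_pos_of_lt i.2⟩⟩

/-- The tuple `m₀ > m₁ > ⋯` is encoded by its tail and the gap `m₀ - m₁ - 1`. -/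
def PosStrictAnti.consEquiv (e : ℕ) : PosStrictAnti (e + 2) ≃ PosStrictAnti (e + 1) × ℕ where
  toFun m := (⟨Fin.tail m.1, m.2.1.comp_strictMono Fin.strictMono_succ, fun i => m.2.2 i.succ⟩,
    m.1 0 - Fin.tail m.1 0 - 1)
  invFun x := ⟨Fin.cons (x.2 + (x.1.1 0 + 1)) x.1.1,
    strictAnti_vecCons.mpr ⟨by omega, x.1.2.1⟩,
    Fin.cases (Nat.add_pos_right _ (Nat.succ_pos _)) x.1.2.2⟩
  left_inv m := Subtype.ext <| by
    have h10 : Fin.tail m.1 0 < m.1 0 := m.2.1 (Fin.succ_pos 0)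
    conv_rhs => rw [← Fin.cons_self_tail m.1]
    dsimp only
    congr 1
    omega
  right_inv x := Prod.ext (Subtype.ext (by dsimp only; exact Fin.tail_cons _ _))
    (by simp only [Fin.cons_zero, Fin.tail_cons]; omega)

def PosStrictAnti.oneEquiv : PosStrictAnti 1 ≃ ℕ where
  toFun m := m.1 0 - 1
  invFun k := ⟨fun _ => k + 1, Subsingleton.strictAnti _, fun _ => k.succ_pos⟩
  left_inv m := Subtype.ext <| funext fun i => by
    have h0 := m.2.2 0
    fin_cases i
    simp only [Fin.zero_eta]
    omega
  right_inv k := rfl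

/-- The summand of `ζ[2, {1}^e : q]`, at the point `m₀ > ⋯ > m_e`. -/
noncomputable def twoOnesTerm (q : ℝ) (e : ℕ) (m : Fin (e + 1) → ℕ) : ℝ :=
  q ^ m 0 / qint q (m 0) * ∏ i, (qint q (m i))⁻¹

lemma qZeta_two_ones (q : ℝ) (e : ℕ) :
    qZeta q (Fin.cons 2 (fun _ : Fin e => 1)) 0
      = ∑' m : PosStrictAnti (e + 1), twoOnesTerm q e m.1 := by
  unfold qZeta
  refine tsum_congr fun m => ?_
  simp only [twoOnesTerm, Fin.prod_univ_succ, Fin.cons_zero, Fin.cons_succ, Nat.add_one_sub_one,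
    tsub_self, mul_one, mul_zero, pow_zero, pow_one, one_div]
  ring

lemma twoOnesTerm_cons (q : ℝ) (e j : ℕ) (p : Fin (e + 1) → ℕ) :
    twoOnesTerm q (e + 1) (Fin.cons j p) = q ^ j / qint q j ^ 2 * ∏ i, (qint q (p i))⁻¹ := by
  simp only [twoOnesTerm, Fin.prod_univ_succ (n := e + 1), Fin.cons_zero, Fin.cons_succ]
  ring

section TwoOnesTerm

variable {q : ℝ}

lemma twoOnesTerm_nonneg (hq0 : 0 < q) (hq1 : q < 1) {e : ℕ} (m : PosStrictAnti (e + 1)) :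
    0 ≤ twoOnesTerm q e m.1 :=
  mul_nonneg (div_nonneg (pow_nonneg hq0.le _) (qint_pos_s8 hq0 hq1 (m.2.2 0)).le)
    (prod_nonneg fun i _ => inv_nonneg.mpr (qint_pos_s8 hq0 hq1 (m.2.2 i)).le)

lemma summable_twoOnesTerm_cons (hq0 : 0 < q) (hq1 : q < 1) {e : ℕ} (p : PosStrictAnti (e + 1)) :
    Summable fun k => twoOnesTerm q (e + 1) (Fin.cons (k + (p.1 0 + 1)) p.1) := by
  simp only [twoOnesTerm_cons]
  exact (summable_pow_div_qint_sq hq0 hq1 _).mul_right _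

lemma tsum_twoOnesTerm_cons_lt (hq0 : 0 < q) (hq1 : q < 1) {e : ℕ} (p : PosStrictAnti (e + 1)) :
    ∑' k, twoOnesTerm q (e + 1) (Fin.cons (k + (p.1 0 + 1)) p.1) < twoOnesTerm q e p.1 := by
  simp only [twoOnesTerm_cons]
  rw [tsum_mul_right, twoOnesTerm]
  exact mul_lt_mul_of_pos_right (tsum_pow_div_qint_sq_lt hq0 hq1 (p.2.2 0))
    (prod_pos fun i _ => inv_pos.mpr (qint_pos_s8 hq0 hq1 (p.2.2 i)))

lemma summable_twoOnesTerm (hq0 : 0 < q) (hq1 : q < 1) (e : ℕ) :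
    Summable fun m : PosStrictAnti (e + 1) => twoOnesTerm q e m.1 := by
  induction e with
  | zero =>
    rw [← PosStrictAnti.oneEquiv.symm.summable_iff]
    convert summable_pow_div_qint_sq hq0 hq1 0 using 2 with k
    show q ^ (k + 1) / qint q (k + 1) * ∏ _i : Fin 1, (qint q (k + 1))⁻¹ = _
    rw [Fin.prod_univ_one]
    ring
  | succ e ih =>
    rw [← (PosStrictAnti.consEquiv e).symm.summable_iff]
    exact summable_prod_of_tsum_le (fun _ => twoOnesTerm_nonneg hq0 hq1 _)
      (summable_twoOnesTerm_cons hq0 hq1) (fun p => (tsum_twoOnesTerm_cons_lt hq0 hq1 p).le) ih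

lemma tsum_twoOnesTerm_succ_lt (hq0 : 0 < q) (hq1 : q < 1) (e : ℕ) :
    ∑' m : PosStrictAnti (e + 2), twoOnesTerm q (e + 1) m.1
      < ∑' m : PosStrictAnti (e + 1), twoOnesTerm q e m.1 := by
  rw [← (PosStrictAnti.consEquiv e).symm.tsum_eq]
  exact tsum_prod_lt_of_tsum_lt (fun _ => twoOnesTerm_nonneg hq0 hq1 _)
    (summable_twoOnesTerm_cons hq0 hq1) (tsum_twoOnesTerm_cons_lt hq0 hq1)
    (summable_twoOnesTerm hq0 hq1 e)

end TwoOnesTerm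

theorem stmt8 (d : ℕ) (q : ℝ) (hq : q ∈ Set.Ioo (0:ℝ) 1) :
    qZeta q (Fin.cons 2 (fun _ : Fin (d + 1) => 1)) 0
      < qZeta q (Fin.cons 2 (fun _ : Fin d => 1)) 0 := by
  rw [qZeta_two_ones, qZeta_two_ones]
  exact tsum_twoOnesTerm_succ_lt hq.1 hq.2 d
end

section
/- Every multiple q-zeta value ζ[k : q] (k admissible) and every ζ[k; r : q) (k admissible, r a positive integer), viewed as a function of q on (0,1), is bounded. -/
open Finset Filter

/-!
Since `k₁ ≥ 2` and `[m:q] ≥ 1`, a term of `ζ[k : q]` is at most `q^{m₁} / ([m₁]² ∏_{i≥2} [m_i])`.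
The inequality `c m q^{cm} ≤ [m:q]` for `0 < c ≤ 1` (from `1 - q ≤ -log q` and `1 + u ≤ eᵘ`)
turns this, after sharing `q^{m₁} ≤ q^{c m₁} ∏ q^{c m_i}` with `c = 1/(d+1)` among the `d + 1`
denominators, into the `q`-free bound `(d+1)^{d+1} / (m₁ ∏ m_i)`. As `m₁` is the largest index,
`m₁ ∏ m_i ≥ ∏ m_i^{1+1/d}`, and these reciprocals sum to at most `ζ(1 + 1/d)^d`. For
`ζ[k; r : q)` the extra factor `m_{d+1}^{-r} ≤ m_{d+1}^{-1}` fits the same scheme with `d + 1`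
indices.
-/

lemma qint_nonneg {q : ℝ} (hq0 : 0 ≤ q) (hq1 : q < 1) (m : ℕ) : 0 ≤ qint q m :=
  div_nonneg (sub_nonneg.2 (pow_le_one₀ hq0 hq1.le)) (sub_nonneg.2 hq1.le)

lemma one_le_qint {q : ℝ} (hq0 : 0 ≤ q) (hq1 : q < 1) {m : ℕ} (hm : 0 < m) : 1 ≤ qint q m := by
  rw [qint, one_le_div (sub_pos.2 hq1)]
  linarith [pow_le_pow_of_le_one hq0 hq1.le hm, pow_one q]

lemma mul_rpow_le_qint {q c : ℝ} (hq0 : 0 < q) (hq1 : q < 1) (hc0 : 0 ≤ c) (hc1 : c ≤ 1)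
    (m : ℕ) : c * m * q ^ (c * m) ≤ qint q m := by
  set u := -(c * m * Real.log q)
  have hy : q ^ (c * (m : ℝ)) = Real.exp (-u) := by
    rw [Real.rpow_def_of_pos hq0, neg_neg]; ring_nf
  have hu : c * m * (1 - q) ≤ u := by
    have := Real.log_le_sub_one_of_pos hq0
    have : 0 ≤ c * m := by positivity
    nlinarith
  have key : u * Real.exp (-u) ≤ 1 - Real.exp (-u) := by
    calc u * Real.exp (-u) = (u + 1) * Real.exp (-u) - Real.exp (-u) := by ring
      _ ≤ Real.exp u * Real.exp (-u) - Real.exp (-u) := by gcongr; exact Real.add_one_le_exp u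
      _ = 1 - Real.exp (-u) := by rw [← Real.exp_add, add_neg_cancel, Real.exp_zero]
  have hmono : q ^ m ≤ q ^ (c * m) := by
    rw [← Real.rpow_natCast]
    exact Real.rpow_le_rpow_of_exponent_ge hq0 hq1.le (mul_le_of_le_one_left (by positivity) hc1)
  rw [qint, le_div_iff₀ (sub_pos.2 hq1)]
  calc c * m * q ^ (c * m) * (1 - q) = c * m * (1 - q) * q ^ (c * m) := by ring
    _ ≤ u * q ^ (c * m) := by gcongr
    _ ≤ 1 - q ^ (c * m) := by rw [hy]; exact key
    _ ≤ 1 - q ^ m := by linarith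

lemma rpow_div_qint_le {q c : ℝ} (hq0 : 0 < q) (hq1 : q < 1) (hc0 : 0 < c) (hc1 : c ≤ 1)
    {m : ℕ} (hm : 0 < m) : q ^ (c * m) / qint q m ≤ (c * m)⁻¹ := by
  have hcm : 0 < c * m := by positivity
  rw [div_le_iff₀ (by linarith [one_le_qint hq0.le hq1 hm]), inv_mul_eq_div, le_div_iff₀ hcm]
  linarith [mul_rpow_le_qint hq0 hq1 hc0.le hc1 m]

lemma qZeta_factor_nonneg {q : ℝ} (hq0 : 0 ≤ q) (hq1 : q < 1) (m k : ℕ) :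
    0 ≤ q ^ (m * (k - 1)) / qint q m ^ k := by
  have := qint_nonneg hq0 hq1 m
  positivity

lemma qZeta_factor_le_inv {q : ℝ} (hq0 : 0 ≤ q) (hq1 : q < 1) {m k : ℕ} (hm : 0 < m)
    (hk : 1 ≤ k) : q ^ (m * (k - 1)) / qint q m ^ k ≤ (qint q m)⁻¹ := by
  have h1 := one_le_qint hq0 hq1 hm
  calc q ^ (m * (k - 1)) / qint q m ^ k ≤ 1 / qint q m ^ 1 :=
        div_le_div₀ zero_le_one (pow_le_one₀ hq0 hq1.le) (by positivity)
          (pow_le_pow_right₀ h1 hk)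
    _ = (qint q m)⁻¹ := by rw [pow_one, one_div]

lemma qZeta_factor_le_pow_div_sq {q : ℝ} (hq0 : 0 ≤ q) (hq1 : q < 1) {m k : ℕ} (hm : 0 < m)
    (hk : 2 ≤ k) : q ^ (m * (k - 1)) / qint q m ^ k ≤ q ^ m / qint q m ^ 2 :=
  div_le_div₀ (by positivity)
    (pow_le_pow_of_le_one hq0 hq1.le (Nat.le_mul_of_pos_right m (by omega)))
    (by have := one_le_qint hq0 hq1 hm; positivity)
    (pow_le_pow_right₀ (one_le_qint hq0 hq1 hm) hk)

lemma prod_qZeta_factor_le {n : ℕ} {q : ℝ} (hq0 : 0 < q) (hq1 : q < 1) (k : Fin (n + 1) → ℕ)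
    (hk0 : 2 ≤ k 0) (hk : ∀ i, 1 ≤ k i) (m : Fin (n + 1) → ℕ) (hm : ∀ i, 0 < m i)
    (hmax : ∀ i, m i ≤ m 0) :
    ∏ i, q ^ (m i * (k i - 1)) / qint q (m i) ^ k i
      ≤ ((n : ℝ) + 2) ^ (n + 2) * ((m 0 : ℝ) * ∏ i, (m i : ℝ))⁻¹ := by
  set c : ℝ := ((n : ℝ) + 2)⁻¹ with hc
  have hcn : c * ((n : ℝ) + 2) = 1 := inv_mul_cancel₀ (by positivity)
  have hc0 : 0 < c := by positivity
  have hc1 : c ≤ 1 := inv_le_one_of_one_le₀ (by linarith [(n.cast_nonneg : (0 : ℝ) ≤ n)])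
  have hinv : ∀ i, 0 ≤ (qint q (m i))⁻¹ := fun i => inv_nonneg.2 (qint_nonneg hq0.le hq1 _)
  have hfactors : ∏ i, q ^ (m i * (k i - 1)) / qint q (m i) ^ k i
      ≤ q ^ m 0 * (qint q (m 0))⁻¹ * ∏ i, (qint q (m i))⁻¹ := by
    rw [Fin.prod_univ_succ, Fin.prod_univ_succ (fun i => (qint q (m i))⁻¹), ← mul_assoc]
    refine mul_le_mul ?_ (prod_le_prod (fun i _ => qZeta_factor_nonneg hq0.le hq1 _ _)
      fun i _ => qZeta_factor_le_inv hq0.le hq1 (hm _) (hk _))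
      (prod_nonneg fun i _ => qZeta_factor_nonneg hq0.le hq1 _ _)
      (mul_nonneg (mul_nonneg (by positivity) (hinv 0)) (hinv 0))
    calc _ ≤ q ^ m 0 / qint q (m 0) ^ 2 := qZeta_factor_le_pow_div_sq hq0.le hq1 (hm 0) hk0
      _ = _ := by ring
  have hsplit : (q ^ m 0 : ℝ) ≤ q ^ (c * m 0) * ∏ i, q ^ (c * m i) := by
    calc (q ^ m 0 : ℝ) = q ^ (c * m 0) * ∏ _i : Fin (n + 1), q ^ (c * m 0) := by
          rw [prod_const, card_univ, Fintype.card_fin, ← Real.rpow_mul_natCast hq0.le,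
            ← Real.rpow_add hq0, ← Real.rpow_natCast]
          congr 1
          push_cast
          linear_combination -(m 0 : ℝ) * hcn
      _ ≤ q ^ (c * m 0) * ∏ i, q ^ (c * m i) := by
          refine mul_le_mul_of_nonneg_left (prod_le_prod (fun i _ => by positivity) fun i _ => ?_)
            (by positivity)
          exact Real.rpow_le_rpow_of_exponent_ge hq0 hq1.le
            (mul_le_mul_of_nonneg_left (Nat.cast_le.2 (hmax i)) hc0.le)
  have hw0 : ∀ i, 0 ≤ q ^ (c * m i) / qint q (m i) := fun i =>
    div_nonneg (by positivity) (qint_nonneg hq0.le hq1 _)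
  have hw : ∀ i, q ^ (c * m i) / qint q (m i) ≤ (c * m i)⁻¹ := fun i =>
    rpow_div_qint_le hq0 hq1 hc0 hc1 (hm i)
  calc ∏ i, q ^ (m i * (k i - 1)) / qint q (m i) ^ k i
      ≤ q ^ m 0 * (qint q (m 0))⁻¹ * ∏ i, (qint q (m i))⁻¹ := hfactors
    _ ≤ q ^ (c * m 0) * (∏ i, q ^ (c * m i)) * (qint q (m 0))⁻¹ * ∏ i, (qint q (m i))⁻¹ :=
        mul_le_mul_of_nonneg_right (mul_le_mul_of_nonneg_right hsplit (hinv 0))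
          (prod_nonneg fun i _ => hinv i)
    _ = q ^ (c * m 0) / qint q (m 0) * ∏ i, q ^ (c * m i) / qint q (m i) := by
        rw [prod_div_distrib, div_eq_mul_inv, div_eq_mul_inv, prod_inv_distrib]; ring
    _ ≤ (c * m 0)⁻¹ * ∏ i, (c * m i)⁻¹ :=
        mul_le_mul (hw 0) (prod_le_prod (fun i _ => hw0 i) fun i _ => hw i)
          (prod_nonneg fun i _ => hw0 i) (by positivity)
    _ = ((n : ℝ) + 2) ^ (n + 2) * ((m 0 : ℝ) * ∏ i, (m i : ℝ))⁻¹ := by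
        simp only [hc, mul_inv, inv_inv, prod_mul_distrib, prod_const, card_univ,
          Fintype.card_fin, prod_inv_distrib]
        ring

lemma prod_rpow_one_add_inv_le {D : ℕ} (a : Fin D → ℝ) (ha : ∀ i, 0 ≤ a i) (j : Fin D)
    (hmax : ∀ i, a i ≤ a j) :
    ∏ i, a i ^ (1 + (D : ℝ)⁻¹) ≤ a j * ∏ i, a i := by
  have hD : (D : ℝ) ≠ 0 := by exact_mod_cast (Fin.pos j).ne'
  calc ∏ i, a i ^ (1 + (D : ℝ)⁻¹) = (∏ i, a i) * ∏ i, a i ^ (D : ℝ)⁻¹ := by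
        rw [← prod_mul_distrib]
        refine prod_congr rfl fun i _ => ?_
        rw [Real.rpow_add' (ha i) (by positivity), Real.rpow_one]
    _ ≤ (∏ i, a i) * ∏ _i : Fin D, a j ^ (D : ℝ)⁻¹ :=
        mul_le_mul_of_nonneg_left
          (prod_le_prod (fun i _ => by have := ha i; positivity)
            fun i _ => Real.rpow_le_rpow (ha i) (hmax i) (by positivity))
          (prod_nonneg fun i _ => ha i)
    _ = a j * ∏ i, a i := by
        rw [prod_const, card_univ, Fintype.card_fin, ← Real.rpow_mul_natCast (ha j),
          inv_mul_cancel₀ hD, Real.rpow_one, mul_comm]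

lemma tsum_le_mul_tsum_pow_of_le_prod {D : ℕ} {P : (Fin D → ℕ) → Prop}
    {f : {m : Fin D → ℕ // P m} → ℝ} {g : ℕ → ℝ} {K : ℝ} (hK : 0 ≤ K) (hg0 : ∀ j, 0 ≤ g j)
    (hg : Summable g) (hf : ∀ x, f x ≤ K * ∏ i, g (x.1 i)) :
    ∑' x, f x ≤ K * (∑' j, g j) ^ D := by
  classical
  refine tsum_le_of_sum_le' (mul_nonneg hK (pow_nonneg (tsum_nonneg hg0) _)) fun u => ?_
  set N := u.sup fun x => univ.sup x.1
  have hbox : u.image Subtype.val ⊆ Fintype.piFinset fun _ => range (N + 1) := by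
    intro v hv
    obtain ⟨x, hx, rfl⟩ := mem_image.1 hv
    refine Fintype.mem_piFinset.2 fun i => mem_range.2 (Nat.lt_succ_of_le ?_)
    exact (le_sup (f := x.1) (mem_univ i)).trans (le_sup (f := fun x => univ.sup x.1) hx)
  calc ∑ x ∈ u, f x ≤ K * ∑ x ∈ u, ∏ i, g (x.1 i) := by
        rw [mul_sum]; exact sum_le_sum fun x _ => hf x
    _ = K * ∑ v ∈ u.image Subtype.val, ∏ i, g (v i) := by
        rw [sum_image fun x _ y _ h => Subtype.ext h]
    _ ≤ K * ∑ v ∈ Fintype.piFinset fun _ => range (N + 1), ∏ i, g (v i) :=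
        mul_le_mul_of_nonneg_left
          (sum_le_sum_of_subset_of_nonneg hbox fun v _ _ => prod_nonneg fun i _ => hg0 _) hK
    _ = K * ∏ _i : Fin D, ∑ j ∈ range (N + 1), g j := by rw [prod_univ_sum]
    _ ≤ K * (∑' j, g j) ^ D := by
        rw [prod_const, card_univ, Fintype.card_fin]
        gcongr
        · exact sum_nonneg fun j _ => hg0 j
        · exact hg.sum_le_tsum _ fun j _ => hg0 j

lemma tsum_le_of_le_inv_mul_max_prod {n : ℕ} {K : ℝ} (hK : 0 ≤ K)
    {f : {m : Fin (n + 1) → ℕ // StrictAnti m ∧ ∀ i, 0 < m i} → ℝ}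
    (hf : ∀ x, f x ≤ K * ((x.1 0 : ℝ) * ∏ i, (x.1 i : ℝ))⁻¹) :
    ∑' x, f x ≤ K * (∑' j : ℕ, ((j : ℝ) ^ (1 + (↑(n + 1) : ℝ)⁻¹))⁻¹) ^ (n + 1) := by
  have hs : 1 < 1 + (↑(n + 1) : ℝ)⁻¹ := lt_add_of_pos_right 1 (by positivity)
  refine tsum_le_mul_tsum_pow_of_le_prod hK (fun j => by positivity)
    (Real.summable_nat_rpow_inv.2 hs) fun x => (hf x).trans ?_
  have hx : ∀ i, (0 : ℝ) < x.1 i := fun i => Nat.cast_pos.2 (x.2.2 i)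
  rw [prod_inv_distrib]
  refine mul_le_mul_of_nonneg_left (inv_anti₀ (prod_pos fun i _ => Real.rpow_pos_of_pos (hx i) _) ?_) hK
  exact prod_rpow_one_add_inv_le _ (fun i => (hx i).le) 0
    fun i => Nat.cast_le.2 (x.2.1.antitone (Fin.zero_le i))

lemma qZeta_nonneg {d : ℕ} {q : ℝ} (hq0 : 0 ≤ q) (hq1 : q < 1) (k : Fin d → ℕ) (n : ℕ) :
    0 ≤ qZeta q k n :=
  tsum_nonneg fun _ => prod_nonneg fun _ _ => qZeta_factor_nonneg hq0 hq1 _ _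

lemma qZetaR_nonneg {d : ℕ} {q : ℝ} (hq0 : 0 ≤ q) (hq1 : q < 1) (k : Fin d → ℕ) (r : ℕ) :
    0 ≤ qZetaR q k r :=
  tsum_nonneg fun _ =>
    div_nonneg (prod_nonneg fun _ _ => qZeta_factor_nonneg hq0 hq1 _ _) (by positivity)

lemma qZeta_le {n : ℕ} {q : ℝ} (hq0 : 0 < q) (hq1 : q < 1) (k : Fin (n + 1) → ℕ)
    (hk0 : 2 ≤ k 0) (hk : ∀ i, 1 ≤ k i) :
    qZeta q k 0 ≤ ((n : ℝ) + 2) ^ (n + 2) *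
      (∑' j : ℕ, ((j : ℝ) ^ (1 + (↑(n + 1) : ℝ)⁻¹))⁻¹) ^ (n + 1) :=
  tsum_le_of_le_inv_mul_max_prod (by positivity) fun x =>
    prod_qZeta_factor_le hq0 hq1 k hk0 hk x.1 x.2.2 fun i => x.2.1.antitone (Fin.zero_le i)

lemma qZetaR_le {n : ℕ} {q : ℝ} (hq0 : 0 < q) (hq1 : q < 1) (k : Fin (n + 1) → ℕ)
    (hk0 : 2 ≤ k 0) (hk : ∀ i, 1 ≤ k i) {r : ℕ} (hr : 0 < r) :
    qZetaR q k r ≤ ((n : ℝ) + 2) ^ (n + 2) *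
      (∑' j : ℕ, ((j : ℝ) ^ (1 + (↑(n + 2) : ℝ)⁻¹))⁻¹) ^ (n + 2) := by
  refine tsum_le_of_le_inv_mul_max_prod (by positivity) fun x => ?_
  have hx : ∀ i, (0 : ℝ) < x.1 i := fun i => Nat.cast_pos.2 (x.2.2 i)
  have hhead := prod_qZeta_factor_le hq0 hq1 k hk0 hk (fun i => x.1 i.castSucc)
    (fun i => x.2.2 _) fun i => x.2.1.antitone (Fin.zero_le _)
  rw [Fin.castSucc_zero] at hhead
  have hlast : ((x.1 (Fin.last _) : ℝ) ^ r)⁻¹ ≤ (x.1 (Fin.last _) : ℝ)⁻¹ :=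
    inv_anti₀ (hx _) (le_self_pow₀ (Nat.one_le_cast.2 (x.2.2 _)) hr.ne')
  calc (∏ i : Fin (n + 1), q ^ (x.1 i.castSucc * (k i - 1)) / qint q (x.1 i.castSucc) ^ k i)
        / (x.1 (Fin.last _) : ℝ) ^ r
      ≤ ((n : ℝ) + 2) ^ (n + 2) * ((x.1 0 : ℝ) * ∏ i : Fin (n + 1), (x.1 i.castSucc : ℝ))⁻¹
        * (x.1 (Fin.last _) : ℝ)⁻¹ := by
        rw [div_eq_mul_inv]
        exact mul_le_mul hhead hlast (by positivity) (by positivity)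
    _ = ((n : ℝ) + 2) ^ (n + 2) * ((x.1 0 : ℝ) * ∏ i, (x.1 i : ℝ))⁻¹ := by
        rw [Fin.prod_univ_castSucc (fun i => (x.1 i : ℝ))]
        simp only [mul_inv]
        ring

theorem stmt12 (d : ℕ) (hd : 0 < d) (k : Fin d → ℕ) (hk1 : 2 ≤ k ⟨0, hd⟩)
    (hk : ∀ i, 1 ≤ k i) (r : ℕ) (hr : 0 < r) :
    (∃ C : ℝ, ∀ q ∈ Set.Ioo (0:ℝ) 1, |qZeta q k 0| ≤ C) ∧
    (∃ C : ℝ, ∀ q ∈ Set.Ioo (0:ℝ) 1, |qZetaR q k r| ≤ C) := by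
  obtain ⟨n, rfl⟩ : ∃ n, d = n + 1 := ⟨d - 1, by omega⟩
  exact ⟨⟨_, fun q hq => (abs_of_nonneg (qZeta_nonneg hq.1.le hq.2 k 0)).trans_le
      (qZeta_le hq.1 hq.2 k hk1 hk)⟩,
    ⟨_, fun q hq => (abs_of_nonneg (qZetaR_nonneg hq.1.le hq.2 k r)).trans_le
      (qZetaR_le hq.1 hq.2 k hk1 hk hr)⟩⟩
end

section
/- For any nonnegative integers n and m, the supremum over q ∈ (0,1) of ζ[2+n, {1}^m : q] equals the multiple zeta value ζ(2+n, {1}^m). That is, ‖ζ[2+n, {1}^m : q]‖ = ζ(2+n, {1}^m) in the sup norm on bounded functions on (0,1). -/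
open Finset Filter

/-!
Write `[m]_c = 1 + c + ⋯ + c ^ (m - 1)` for `0 < c ≤ 1`, so that `c = q` gives the q-MZV and
`c = 1` the MZV. Each term of the q-series tends to the corresponding classical term as `q → 1⁻`,
which gives `≥`. For `≤` compare termwise when `b ≤ a`: with `h = m₁`, since `m ↦ m / [m]` is
nondecreasing, `∏ 1 / [mᵢ] ≤ (h / [h]) ^ (b + 1) ∏ 1 / mᵢ`, and the surplus factor
`q ^ (h (a + 1)) (h / [h]) ^ (a + b + 2) ≤ (q ^ h h² / [h]²) ^ (a + 1)` is at most `1` by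
Cauchy–Schwarz. The case `b > a` reduces to this by Bradley's duality, applied at `q` and at `1`.
Duality is proved uniformly in `c` by moving the factors `c ^ h / [h]` one at a time from one chain
of indices to another, through the telescoping sum `∑_{t > p} G(m, t) / [t] = (c ^ m / [m]) G(m, p)`
for `G(m, p) = c ^ (m p) / [m + p choose m]_c`. Duality also gives finiteness of the classical side:
`ζ(a + 2, {1}^b) ≤ ζ(2, {1}^b) = ζ(b + 2) ≤ ζ(2)`.
-/

namespace QMZV

open scoped ENNReal Topology

section QNum

variable {c : ℝ}

/-- `[m]_c`; unlike `qint c m` it also makes sense at `c = 1`, where it is `m`. -/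
def qnum (c : ℝ) (m : ℕ) : ℝ := ∑ j ∈ range m, c ^ j

@[simp] lemma qnum_one (m : ℕ) : qnum 1 m = m := by simp [qnum]

lemma qint_eq_qnum {q : ℝ} (hq : q ≠ 1) (m : ℕ) : qint q m = qnum q m := by
  rw [qnum, geom_sum_eq hq, qint, ← neg_div_neg_eq, neg_sub, neg_sub]

lemma qnum_add (m p : ℕ) : qnum c (m + p) = qnum c m + c ^ m * qnum c p := by
  simp only [qnum, sum_range_add, pow_add, mul_sum]

lemma continuous_qnum (m : ℕ) : Continuous fun c => qnum c m := by
  unfold qnum; fun_prop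

lemma qnum_nonneg (hc : 0 ≤ c) (m : ℕ) : 0 ≤ qnum c m :=
  sum_nonneg fun _ _ => pow_nonneg hc _

lemma one_le_qnum (hc : 0 ≤ c) {m : ℕ} (hm : 1 ≤ m) : 1 ≤ qnum c m := by
  obtain ⟨p, rfl⟩ := Nat.exists_eq_add_of_le hm
  rw [qnum_add]
  simpa [qnum] using mul_nonneg (pow_nonneg hc 1) (qnum_nonneg hc p)

lemma qnum_pos (hc : 0 ≤ c) {m : ℕ} (hm : 1 ≤ m) : 0 < qnum c m :=
  one_pos.trans_le (one_le_qnum hc hm)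

lemma qnum_le (hc₀ : 0 ≤ c) (hc₁ : c ≤ 1) (m : ℕ) : qnum c m ≤ m := by
  simpa [qnum] using sum_le_sum fun j (_ : j ∈ range m) => pow_le_one₀ hc₀ hc₁

lemma mul_pow_pred_le_qnum (hc₀ : 0 ≤ c) (hc₁ : c ≤ 1) (m : ℕ) :
    m * c ^ (m - 1) ≤ qnum c m := by
  simpa [qnum] using sum_le_sum fun j (hj : j ∈ range m) =>
    pow_le_pow_of_le_one hc₀ hc₁ (Nat.le_pred_of_lt (mem_range.1 hj))

lemma qnum_mul_le_mul_qnum (hc₀ : 0 ≤ c) (hc₁ : c ≤ 1) {m n : ℕ} (hmn : m ≤ n) :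
    qnum c n * m ≤ qnum c m * n := by
  obtain ⟨p, rfl⟩ := Nat.exists_eq_add_of_le hmn
  have hp := qnum_le hc₀ hc₁ p
  have hcm := pow_nonneg hc₀ m
  have hm : m * c ^ m ≤ qnum c m := (mul_pow_pred_le_qnum hc₀ hc₁ m).trans' <|
    mul_le_mul_of_nonneg_left (pow_le_pow_of_le_one hc₀ hc₁ (m.sub_le 1)) (Nat.cast_nonneg m)
  rw [qnum_add]
  push_cast
  nlinarith [mul_le_mul_of_nonneg_left hp (mul_nonneg hcm (Nat.cast_nonneg m)),
    mul_le_mul_of_nonneg_right hm (Nat.cast_nonneg p)]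

/-- Cauchy–Schwarz for the sequences `√c ^ j` and `√c ^ (m - 1 - j)`, whose product is constant. -/
lemma sq_mul_pow_le_qnum_sq (hc : 0 ≤ c) (m : ℕ) :
    (m : ℝ) ^ 2 * c ^ (m - 1) ≤ qnum c m ^ 2 := by
  have hcs := sum_mul_sq_le_sq_mul_sq (range m) (fun j => √c ^ j) (fun j => √c ^ (m - 1 - j))
  have hsq : ∀ k, (√c ^ k) ^ 2 = c ^ k := fun k => by
    rw [← pow_mul, mul_comm, pow_mul, Real.sq_sqrt hc]
  have hconst : ∀ j ∈ range m, √c ^ j * √c ^ (m - 1 - j) = √c ^ (m - 1) := fun j hj => by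
    rw [← pow_add]; congr 1; have := mem_range.1 hj; omega
  rw [sum_congr rfl hconst, sum_const, card_range, nsmul_eq_mul, mul_pow, hsq] at hcs
  simp only [hsq] at hcs
  rwa [sum_range_reflect (fun j => c ^ j) m, ← qnum, ← sq] at hcs

end QNum

section InvQBinom

variable {c : ℝ}

def qfac (c : ℝ) (n : ℕ) : ℝ := ∏ j ∈ range n, qnum c (j + 1)

lemma qfac_pos (hc : 0 ≤ c) (n : ℕ) : 0 < qfac c n :=
  prod_pos fun _ _ => qnum_pos hc (Nat.le_add_left 1 _)

lemma qfac_succ (n : ℕ) : qfac c (n + 1) = qfac c n * qnum c (n + 1) := prod_range_succ _ _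

/-- `c ^ (m * p)` divided by the Gaussian binomial coefficient `[m + p choose m]_c`. -/
noncomputable def invQBinom (c : ℝ) (m p : ℕ) : ℝ :=
  c ^ (m * p) * qfac c m * qfac c p / qfac c (m + p)

lemma invQBinom_comm (m p : ℕ) : invQBinom c m p = invQBinom c p m := by
  rw [invQBinom, invQBinom, Nat.mul_comm, Nat.add_comm, mul_right_comm (c ^ _)]

lemma invQBinom_nonneg (hc : 0 ≤ c) (m p : ℕ) : 0 ≤ invQBinom c m p :=
  div_nonneg (mul_nonneg (mul_nonneg (pow_nonneg hc _) (qfac_pos hc m).le) (qfac_pos hc p).le)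
    (qfac_pos hc _).le

lemma invQBinom_zero_right (hc : 0 ≤ c) (m : ℕ) : invQBinom c m 0 = 1 := by
  rw [invQBinom, Nat.mul_zero, pow_zero, one_mul, show qfac c 0 = 1 from prod_range_zero _,
    mul_one, Nat.add_zero, div_self (qfac_pos hc m).ne']

lemma invQBinom_one_right (hc : 0 ≤ c) (m : ℕ) : invQBinom c m 1 = c ^ m / qnum c (m + 1) := by
  have := (qfac_pos hc m).ne'
  rw [invQBinom, mul_one, show qfac c 1 = 1 by simp [qfac, qnum], mul_one, qfac_succ]
  field_simp

/-- The telescoping identity behind Bradley's duality: it comes from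
`[m + p + 1] = [m] + c ^ m [p + 1]`. -/
lemma invQBinom_succ_div (hc : 0 ≤ c) {m : ℕ} (hm : 1 ≤ m) (p : ℕ) :
    invQBinom c m (p + 1) / qnum c (p + 1)
      = c ^ m / qnum c m * (invQBinom c m p - invQBinom c m (p + 1)) := by
  have hfac := (qfac_pos hc (m + p)).ne'
  have hm' := (qnum_pos hc hm).ne'
  have hp := (qnum_pos hc (Nat.le_add_left 1 p)).ne'
  have hmp := (qnum_pos hc (Nat.le_add_left 1 (m + p))).ne'
  rw [invQBinom, invQBinom, ← add_assoc, qfac_succ, qfac_succ]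
  rw [show m + p + 1 = m + (p + 1) by ring, qnum_add m (p + 1)] at hmp ⊢
  generalize qnum c (p + 1) = B at hp hmp ⊢
  generalize qnum c m = A at hm' hmp ⊢
  rw [mul_comm] at hmp
  field_simp
  ring

lemma invQBinom_antitone (hc : 0 < c) {m : ℕ} (hm : 1 ≤ m) : Antitone (invQBinom c m) := by
  refine antitone_nat_of_succ_le fun p => sub_nonneg.1 ?_
  have hx : 0 < c ^ m / qnum c m := div_pos (pow_pos hc m) (qnum_pos hc.le hm)
  have hl : 0 ≤ invQBinom c m (p + 1) / qnum c (p + 1) :=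
    div_nonneg (invQBinom_nonneg hc.le _ _) (qnum_nonneg hc.le _)
  rw [invQBinom_succ_div hc.le hm p] at hl
  exact nonneg_of_mul_nonneg_right hl hx

lemma invQBinom_le (hc₀ : 0 < c) (hc₁ : c ≤ 1) {m : ℕ} (hm : 1 ≤ m) (p : ℕ) :
    invQBinom c m p ≤ 1 / (p + 1) := by
  rcases Nat.eq_zero_or_pos p with rfl | hp
  · simp [invQBinom_zero_right hc₀.le]
  calc invQBinom c m p = invQBinom c p m := invQBinom_comm m p
    _ ≤ invQBinom c p 1 := invQBinom_antitone hc₀ hp hm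
    _ = c ^ p / qnum c (p + 1) := invQBinom_one_right hc₀.le p
    _ ≤ 1 / (p + 1) := by
      have h := mul_pow_pred_le_qnum hc₀.le hc₁ (p + 1)
      rw [div_le_div_iff₀ (qnum_pos hc₀.le (Nat.le_add_left 1 p)) (by positivity)]
      push_cast at h
      simpa [mul_comm] using h

lemma tendsto_invQBinom (hc₀ : 0 < c) (hc₁ : c ≤ 1) {m : ℕ} (hm : 1 ≤ m) :
    Tendsto (invQBinom c m) atTop (𝓝 0) :=
  squeeze_zero (invQBinom_nonneg hc₀.le m) (invQBinom_le hc₀ hc₁ hm)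
    tendsto_one_div_add_atTop_nhds_zero_nat

lemma hasSum_sub_succ {f : ℕ → ℝ} (hf : Antitone f) (hlim : Tendsto f atTop (𝓝 0)) :
    HasSum (fun i => f i - f (i + 1)) (f 0) := by
  rw [hasSum_iff_tendsto_nat_of_nonneg (fun i => sub_nonneg.2 (hf i.le_succ))]
  simp_rw [sum_range_sub']
  simpa using tendsto_const_nhds.sub hlim

lemma hasSum_invQBinom_div (hc₀ : 0 < c) (hc₁ : c ≤ 1) {m : ℕ} (hm : 1 ≤ m) (b : ℕ) :
    HasSum (fun i => invQBinom c m (b + 1 + i) / qnum c (b + 1 + i))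
      (c ^ m / qnum c m * invQBinom c m b) := by
  have h := (hasSum_sub_succ (f := fun i => invQBinom c m (i + b))
    (fun i j hij => invQBinom_antitone hc₀ hm (by omega))
    ((tendsto_invQBinom hc₀ hc₁ hm).comp (tendsto_add_atTop_nat b))).mul_left (c ^ m / qnum c m)
  have e : (fun i => invQBinom c m (b + 1 + i) / qnum c (b + 1 + i))
      = fun i => c ^ m / qnum c m * (invQBinom c m (i + b) - invQBinom c m (i + 1 + b)) := by
    funext i
    rw [show b + 1 + i = i + b + 1 by ring, invQBinom_succ_div hc₀.le hm, Nat.add_right_comm]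
  simpa [e] using h

end InvQBinom

abbrev Chain (l : ℕ) := {f : Fin l → ℕ // StrictAnti f ∧ ∀ i, 0 < f i}

namespace Chain

/-- The largest index `m₁`; `0` for the empty chain. -/
def head : {l : ℕ} → Chain l → ℕ
  | 0, _ => 0
  | _ + 1, ch => ch.1 0

lemma one_le_head {l : ℕ} (ch : Chain (l + 1)) : 1 ≤ ch.head := ch.2.2 0

lemma lt_of_head_lt {l : ℕ} (ch : Chain l) {t : ℕ} (ht : ch.head < t) (i : Fin l) :
    ch.1 i < t := by
  cases l with
  | zero => exact i.elim0
  | succ l => exact (ch.2.1.antitone (Fin.zero_le i)).trans_lt ht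

lemma le_head {l : ℕ} (ch : Chain (l + 1)) (i : Fin (l + 1)) : ch.1 i ≤ ch.head :=
  ch.2.1.antitone (Fin.zero_le i)

instance : Unique (Chain 0) where
  default := ⟨Fin.elim0, fun i => i.elim0, fun i => i.elim0⟩
  uniq _ := Subtype.ext (funext fun i => i.elim0)

/-- Every extension of `ch` by a new head arises for exactly one `i`. -/
def cons {l : ℕ} (ch : Chain l) (i : ℕ) : Chain (l + 1) :=
  ⟨Fin.cons (ch.head + 1 + i) ch.1,
    (Fin.liftFun_cons (· > ·)).2 ⟨fun j => ch.lt_of_head_lt (by omega) j, ch.2.1⟩,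
    Fin.cases (by simp) (fun j => by simpa using ch.2.2 j)⟩

lemma head_cons {l : ℕ} (ch : Chain l) (i : ℕ) : (ch.cons i).head = ch.head + 1 + i := rfl

def tail {l : ℕ} (ch : Chain (l + 1)) : Chain l :=
  ⟨Fin.tail ch.1, ch.2.1.comp_strictMono (Fin.strictMono_succ), fun i => ch.2.2 i.succ⟩

lemma head_tail_lt {l : ℕ} (ch : Chain (l + 1)) : ch.tail.head < ch.head := by
  cases l with
  | zero => exact ch.one_le_head
  | succ l => exact ch.2.1 (show (0 : Fin (l + 2)) < 1 by simp)

lemma tail_cons {l : ℕ} (ch : Chain l) (i : ℕ) : (ch.cons i).tail = ch :=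
  Subtype.ext (Fin.tail_cons (α := fun _ => ℕ) (ch.head + 1 + i) ch.1)

def consEquiv (l : ℕ) : Chain l × ℕ ≃ Chain (l + 1) where
  toFun p := p.1.cons p.2
  invFun ch := (ch.tail, ch.head - ch.tail.head - 1)
  left_inv p := by
    simp only [tail_cons, head_cons]
    ext
    · rfl
    · omega
  right_inv ch := by
    refine Subtype.ext ?_
    change Fin.cons (ch.tail.head + 1 + (ch.head - ch.tail.head - 1)) (Fin.tail ch.1) = ch.1
    rw [show ch.tail.head + 1 + (ch.head - ch.tail.head - 1) = ch.head by
      have := ch.head_tail_lt; omega]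
    exact Fin.cons_self_tail ch.1

lemma tsum_succ {l : ℕ} (f : Chain (l + 1) → ℝ≥0∞) :
    ∑' ch, f ch = ∑' (ch : Chain l) (i : ℕ), f (ch.cons i) := by
  rw [← (consEquiv l).tsum_eq, ← ENNReal.tsum_prod]
  rfl

lemma tsum_zero (f : Chain 0 → ℝ≥0∞) : ∑' ch, f ch = f default :=
  tsum_eq_single default fun ch h => (h (Unique.uniq _ ch)).elim

end Chain

section Duality

variable {c : ℝ}

noncomputable def headFactor (c : ℝ) (m : ℕ) : ℝ≥0∞ := ENNReal.ofReal (c ^ m / qnum c m)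

noncomputable def invQnum (c : ℝ) (m : ℕ) : ℝ≥0∞ := ENNReal.ofReal (qnum c m)⁻¹

noncomputable def chainWeight {l : ℕ} (c : ℝ) (ch : Chain l) : ℝ≥0∞ :=
  ∏ i, invQnum c (ch.1 i)

lemma chainWeight_cons {l : ℕ} (ch : Chain l) (i : ℕ) :
    chainWeight c (ch.cons i) = invQnum c (ch.head + 1 + i) * chainWeight c ch :=
  Fin.prod_univ_succ _

lemma chainWeight_default : chainWeight c (default : Chain 0) = 1 := Fin.prod_univ_zero _

/-- `ζ_c[a + 2, {1}^b]`, with `ζ_1` the multiple zeta value `ζ(a + 2, {1}^b)`. -/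
noncomputable def qzetaOnes (c : ℝ) (a b : ℕ) : ℝ≥0∞ :=
  ∑' ch : Chain (b + 1), headFactor c ch.head ^ (a + 1) * chainWeight c ch

lemma tsum_invQnum_mul_invQBinom (hc₀ : 0 < c) (hc₁ : c ≤ 1) {m : ℕ} (hm : 1 ≤ m) (b : ℕ) :
    ∑' i, invQnum c (b + 1 + i) * ENNReal.ofReal (invQBinom c m (b + 1 + i))
      = headFactor c m * ENNReal.ofReal (invQBinom c m b) := by
  have h := hasSum_invQBinom_div hc₀ hc₁ hm b
  rw [headFactor, ← ENNReal.ofReal_mul (div_nonneg (pow_nonneg hc₀.le m) (qnum_nonneg hc₀.le m)),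
    ← h.tsum_eq, ENNReal.ofReal_tsum_of_nonneg
      (fun i => div_nonneg (invQBinom_nonneg hc₀.le _ _) (qnum_nonneg hc₀.le _)) h.summable]
  refine tsum_congr fun i => ?_
  rw [invQnum, ← ENNReal.ofReal_mul (inv_nonneg.2 (qnum_nonneg hc₀.le _)), div_eq_inv_mul]

/-- Pairs of chains linked by `invQBinom`. For `j = 0` and `e = a + 1` this is
`qzetaOnes c a b`; each step `e + 1 → e` trades a factor `headFactor` of the first chain for a
new head of the second one. -/
noncomputable def transfer (c : ℝ) (e j b : ℕ) : ℝ≥0∞ :=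
  ∑' (ch : Chain (b + 1)) (d : Chain j), headFactor c ch.head ^ e * chainWeight c ch
    * ENNReal.ofReal (invQBinom c ch.head d.head) * chainWeight c d

lemma transfer_succ_left (hc₀ : 0 < c) (hc₁ : c ≤ 1) (e j b : ℕ) :
    transfer c (e + 1) j b = transfer c e (j + 1) b := by
  refine tsum_congr fun ch => ?_
  rw [Chain.tsum_succ]
  refine tsum_congr fun d => ?_
  simp only [Chain.head_cons, chainWeight_cons]
  calc headFactor c ch.head ^ (e + 1) * chainWeight c ch
          * ENNReal.ofReal (invQBinom c ch.head d.head) * chainWeight c d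
      = headFactor c ch.head ^ e * chainWeight c ch * chainWeight c d
          * (headFactor c ch.head * ENNReal.ofReal (invQBinom c ch.head d.head)) := by ring
    _ = _ := by
      rw [← tsum_invQnum_mul_invQBinom hc₀ hc₁ ch.one_le_head, ← ENNReal.tsum_mul_left]
      exact tsum_congr fun i => by ring

lemma transfer_add_left (hc₀ : 0 < c) (hc₁ : c ≤ 1) (e j b k : ℕ) :
    transfer c (e + k) j b = transfer c e (j + k) b := by
  induction k generalizing j with
  | zero => rfl
  | succ k ih => rw [← add_assoc, transfer_succ_left hc₀ hc₁, ih, add_right_comm, add_assoc]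

lemma transfer_zero_left_comm (a b : ℕ) : transfer c 0 (a + 1) b = transfer c 0 (b + 1) a := by
  rw [transfer, transfer, ENNReal.tsum_comm]
  refine tsum_congr fun d => tsum_congr fun ch => ?_
  rw [invQBinom_comm]
  ring

lemma transfer_zero_right (hc : 0 ≤ c) (a b : ℕ) :
    transfer c (a + 1) 0 b = qzetaOnes c a b := by
  refine tsum_congr fun ch => ?_
  rw [Chain.tsum_zero, chainWeight_default, Chain.head, invQBinom_zero_right hc]
  simp

/-- Bradley's duality. -/
theorem qzetaOnes_comm (hc₀ : 0 < c) (hc₁ : c ≤ 1) (a b : ℕ) :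
    qzetaOnes c a b = qzetaOnes c b a := by
  have h : ∀ a b, transfer c (a + 1) 0 b = transfer c 0 (a + 1) b := fun a b => by
    simpa using transfer_add_left hc₀ hc₁ 0 0 b (a + 1)
  rw [← transfer_zero_right hc₀.le, h, transfer_zero_left_comm, ← h,
    transfer_zero_right hc₀.le]

end Duality

section Comparison

variable {c : ℝ}

noncomputable def qzetaOnesTerm (c : ℝ) (a : ℕ) {l : ℕ} (ch : Chain l) : ℝ :=
  (c ^ ch.head / qnum c ch.head) ^ (a + 1) * ∏ i, (qnum c (ch.1 i))⁻¹

lemma qzetaOnesTerm_nonneg (hc : 0 ≤ c) (a : ℕ) {l : ℕ} (ch : Chain l) :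
    0 ≤ qzetaOnesTerm c a ch :=
  mul_nonneg (pow_nonneg (div_nonneg (pow_nonneg hc _) (qnum_nonneg hc _)) _)
    (prod_nonneg fun _ _ => inv_nonneg.2 (qnum_nonneg hc _))

lemma qzetaOnes_eq_tsum (hc : 0 ≤ c) (a b : ℕ) :
    qzetaOnes c a b = ∑' ch : Chain (b + 1), ENNReal.ofReal (qzetaOnesTerm c a ch) := by
  refine tsum_congr fun ch => ?_
  rw [qzetaOnesTerm, ENNReal.ofReal_mul (pow_nonneg (div_nonneg (pow_nonneg hc _)
      (qnum_nonneg hc _)) _), ENNReal.ofReal_pow (div_nonneg (pow_nonneg hc _) (qnum_nonneg hc _)),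
    ENNReal.ofReal_prod_of_nonneg fun _ _ => inv_nonneg.2 (qnum_nonneg hc _)]
  rfl

lemma toReal_qzetaOnes (hc : 0 ≤ c) (a b : ℕ) :
    (qzetaOnes c a b).toReal = ∑' ch : Chain (b + 1), qzetaOnesTerm c a ch := by
  rw [qzetaOnes_eq_tsum hc, ENNReal.tsum_toReal_eq fun _ => ENNReal.ofReal_ne_top]
  exact tsum_congr fun ch => ENNReal.toReal_ofReal (qzetaOnesTerm_nonneg hc a ch)

lemma qzetaOnesTerm_le_at_one (hc₀ : 0 ≤ c) (hc₁ : c ≤ 1) {a b : ℕ} (hba : b ≤ a)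
    (ch : Chain (b + 1)) : qzetaOnesTerm c a ch ≤ qzetaOnesTerm 1 a ch := by
  set h := ch.head
  have hh : (0 : ℝ) < h := Nat.cast_pos.2 ch.one_le_head
  have hqh := qnum_pos hc₀ ch.one_le_head
  set u := (h : ℝ) / qnum c h
  have hu : 1 ≤ u := (one_le_div hqh).2 (qnum_le hc₀ hc₁ h)
  have hprod : ∏ i, (qnum c (ch.1 i))⁻¹ ≤ u ^ (b + 1) * ∏ i, ((ch.1 i : ℝ))⁻¹ := by
    have e : u ^ (b + 1) * ∏ i, ((ch.1 i : ℝ))⁻¹ = ∏ i, u * ((ch.1 i : ℝ))⁻¹ := by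
      rw [prod_mul_distrib, prod_const, card_univ, Fintype.card_fin]
    rw [e]
    refine prod_le_prod (fun i _ => inv_nonneg.2 (qnum_nonneg hc₀ _)) fun i _ => ?_
    have hm := ch.2.2 i
    rw [← div_eq_mul_inv, div_div, inv_eq_one_div,
      div_le_div_iff₀ (qnum_pos hc₀ hm) (by positivity)]
    linarith [qnum_mul_le_mul_qnum hc₀ hc₁ (ch.le_head i)]
  have hamgm : c ^ h * u ^ 2 ≤ 1 := by
    rw [div_pow, mul_div_assoc', div_le_one (by positivity)]
    calc c ^ h * (h : ℝ) ^ 2 ≤ c ^ (h - 1) * (h : ℝ) ^ 2 :=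
          mul_le_mul_of_nonneg_right (pow_le_pow_of_le_one hc₀ hc₁ (h.sub_le 1)) (sq_nonneg _)
      _ ≤ qnum c h ^ 2 := by linarith [sq_mul_pow_le_qnum_sq hc₀ h]
  set P := ∏ i, ((ch.1 i : ℝ))⁻¹
  calc qzetaOnesTerm c a ch ≤ (c ^ h / qnum c h) ^ (a + 1) * (u ^ (b + 1) * P) :=
        mul_le_mul_of_nonneg_left hprod (by positivity)
    _ = (h : ℝ)⁻¹ ^ (a + 1) * ((c ^ h * u) ^ (a + 1) * u ^ (b + 1)) * P := by
        have e : c ^ h / qnum c h = (h : ℝ)⁻¹ * (c ^ h * u) := by simp only [u]; field_simp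
        rw [e, mul_pow]
        ring
    _ ≤ (h : ℝ)⁻¹ ^ (a + 1) * ((c ^ h * u) ^ (a + 1) * u ^ (a + 1)) * P := by gcongr
    _ = (h : ℝ)⁻¹ ^ (a + 1) * (c ^ h * u ^ 2) ^ (a + 1) * P := by ring
    _ ≤ (h : ℝ)⁻¹ ^ (a + 1) * 1 * P := by
        gcongr
        exact pow_le_one₀ (by positivity) hamgm
    _ = qzetaOnesTerm 1 a ch := by simp [qzetaOnesTerm, h, P]

lemma qzetaOnes_le_at_one_of_le (hc₀ : 0 ≤ c) (hc₁ : c ≤ 1) {a b : ℕ} (hba : b ≤ a) :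
    qzetaOnes c a b ≤ qzetaOnes 1 a b := by
  rw [qzetaOnes_eq_tsum hc₀, qzetaOnes_eq_tsum zero_le_one]
  exact ENNReal.tsum_le_tsum fun ch =>
    ENNReal.ofReal_le_ofReal (qzetaOnesTerm_le_at_one hc₀ hc₁ hba ch)

theorem qzetaOnes_le_at_one (hc₀ : 0 < c) (hc₁ : c ≤ 1) (a b : ℕ) :
    qzetaOnes c a b ≤ qzetaOnes 1 a b := by
  rcases le_total b a with hba | hab
  · exact qzetaOnes_le_at_one_of_le hc₀.le hc₁ hba
  · rw [qzetaOnes_comm hc₀ hc₁, qzetaOnes_comm one_pos le_rfl a]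
    exact qzetaOnes_le_at_one_of_le hc₀.le hc₁ hab

lemma qzetaOnes_antitone_left (hc₀ : 0 ≤ c) (hc₁ : c ≤ 1) (b : ℕ) :
    Antitone fun a => qzetaOnes c a b := by
  refine antitone_nat_of_succ_le fun a => ENNReal.tsum_le_tsum fun ch => mul_le_mul_left ?_ _
  have hx : headFactor c ch.head ≤ 1 := ENNReal.ofReal_le_one.2 <| div_le_one_of_le₀
    ((pow_le_one₀ hc₀ hc₁).trans (one_le_qnum hc₀ ch.one_le_head)) (qnum_nonneg hc₀ _)
  exact pow_le_pow_of_le_one zero_le hx (Nat.le_succ _)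

lemma qzetaOnes_one_zero_zero_ne_top : qzetaOnes 1 0 0 ≠ ⊤ := by
  have hterm : ∀ i : ℕ,
      qzetaOnesTerm 1 0 ((default : Chain 0).cons i) = 1 / ((i + 1 : ℕ) : ℝ) ^ 2 := fun i => by
    simp [qzetaOnesTerm, Chain.head, Chain.cons, add_comm, sq]
  have hsum : Summable fun i : ℕ => 1 / ((i + 1 : ℕ) : ℝ) ^ 2 :=
    (summable_nat_add_iff 1).2 (Real.summable_one_div_nat_pow.2 one_lt_two)
  rw [qzetaOnes_eq_tsum zero_le_one, Chain.tsum_succ, Chain.tsum_zero]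
  simp only [hterm]
  rw [← ENNReal.ofReal_tsum_of_nonneg (fun _ => by positivity) hsum]
  exact ENNReal.ofReal_ne_top

theorem qzetaOnes_one_ne_top (a b : ℕ) : qzetaOnes 1 a b ≠ ⊤ := by
  have hanti : ∀ a b, qzetaOnes 1 a b ≤ qzetaOnes 1 0 b := fun a b =>
    qzetaOnes_antitone_left zero_le_one le_rfl b (Nat.zero_le a)
  refine ne_top_of_le_ne_top qzetaOnes_one_zero_zero_ne_top ?_
  calc qzetaOnes 1 a b ≤ qzetaOnes 1 0 b := hanti a b
    _ = qzetaOnes 1 b 0 := qzetaOnes_comm one_pos le_rfl 0 b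
    _ ≤ qzetaOnes 1 0 0 := hanti b 0

end Comparison

lemma continuousAt_qzetaOnesTerm (a : ℕ) {l : ℕ} (ch : Chain (l + 1)) :
    ContinuousAt (fun c => qzetaOnesTerm c a ch) 1 := by
  have hne : ∀ {m : ℕ}, 1 ≤ m → qnum 1 m ≠ 0 := fun hm => (qnum_pos zero_le_one hm).ne'
  refine ((((continuous_pow _).continuousAt).div (continuous_qnum _).continuousAt
    (hne ch.one_le_head)).pow _).mul (tendsto_finsetProd _ fun i _ => ?_)
  exact (continuous_qnum _).continuousAt.inv₀ (hne (ch.2.2 i))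

lemma qzetaOnes_one_le_iSup (a b : ℕ) :
    qzetaOnes 1 a b ≤ ⨆ q : Set.Ioo (0 : ℝ) 1, qzetaOnes q a b := by
  rw [qzetaOnes_eq_tsum zero_le_one, ENNReal.tsum_eq_iSup_sum]
  refine iSup_le fun s => le_of_tendsto (x := 𝓝[<] (1 : ℝ))
    (f := fun c => ∑ ch ∈ s, ENNReal.ofReal (qzetaOnesTerm c a ch)) ?_ ?_
  · exact tendsto_finsetSum s fun ch _ => (ENNReal.continuous_ofReal.tendsto _).comp
      ((continuousAt_qzetaOnesTerm a ch).tendsto.mono_left nhdsWithin_le_nhds)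
  · filter_upwards [Ioo_mem_nhdsLT_of_mem ⟨zero_lt_one, le_rfl⟩] with c hc
    refine le_trans ?_ (le_iSup (fun q : Set.Ioo (0 : ℝ) 1 => qzetaOnes q a b) ⟨c, hc⟩)
    rw [qzetaOnes_eq_tsum hc.1.le]
    exact ENNReal.sum_le_tsum s

lemma prod_cons_ones_eq (c : ℝ) (n : ℕ) {m : ℕ} (ch : Chain (m + 1)) :
    ∏ i, c ^ (ch.1 i * ((Fin.cons (2 + n) (fun _ : Fin m => 1) : Fin (m + 1) → ℕ) i - 1))
        / qnum c (ch.1 i) ^ ((Fin.cons (2 + n) (fun _ : Fin m => 1) : Fin (m + 1) → ℕ) i)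
      = qzetaOnesTerm c n ch := by
  rw [Fin.prod_univ_succ, qzetaOnesTerm, Fin.prod_univ_succ]
  simp only [Chain.head, Fin.cons_zero, Fin.cons_succ, Nat.sub_self, mul_zero, pow_zero, pow_one,
    one_div]
  rw [show 2 + n - 1 = n + 1 by omega, show 2 + n = n + 1 + 1 by omega, pow_succ _ (n + 1),
    div_pow, ← pow_mul]
  ring

end QMZV

open QMZV

theorem stmt13 (n m : ℕ) :
    ⨆ q : Set.Ioo (0:ℝ) 1,
        qZeta (q : ℝ) (Fin.cons (2 + n) (fun _ : Fin m => 1)) 0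
      = mzv (Fin.cons (2 + n) (fun _ : Fin m => 1)) := by
  have hle : ∀ q : Set.Ioo (0 : ℝ) 1, qzetaOnes q n m ≤ qzetaOnes 1 n m := fun q =>
    qzetaOnes_le_at_one q.2.1 q.2.2.le n m
  have hsup : ⨆ q : Set.Ioo (0 : ℝ) 1, qzetaOnes q n m = qzetaOnes 1 n m :=
    le_antisymm (iSup_le hle) (qzetaOnes_one_le_iSup n m)
  have hq : ∀ q : Set.Ioo (0 : ℝ) 1,
      qZeta (q : ℝ) (Fin.cons (2 + n) (fun _ : Fin m => 1)) 0 = (qzetaOnes q n m).toReal := by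
    intro q
    rw [toReal_qzetaOnes q.2.1.le, qZeta]
    simp only [qint_eq_qnum q.2.2.ne, prod_cons_ones_eq]
  have h1 : mzv (Fin.cons (2 + n) (fun _ : Fin m => 1)) = (qzetaOnes 1 n m).toReal := by
    rw [toReal_qzetaOnes zero_le_one, mzv, ← tsum_congr fun ch => prod_cons_ones_eq 1 n ch]
    simp only [one_pow, qnum_one]
  rw [iSup_congr hq, ← ENNReal.toReal_iSup fun q =>
    ne_top_of_le_ne_top (qzetaOnes_one_ne_top n m) (hle q), hsup, h1]
end

section
/- Let k₁ ≥ 2 be an integer and n ≥ 1 an integer. Then for every q ∈ (0,1), ((q-1)/log q) · (q^{n+1}/[n+1:q])^{k₁-1} / (k₁-1) < ζ[k₁ : q]_n < ((q-1)/log q) · (q^n/[n:q])^{k₁-1} / (k₁-1), where ζ[k₁:q]_n = Σ_{m > n} q^{m(k₁-1)}/[m:q]^{k₁}. -/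
open Finset Filter

/-! With `c = k₁ - 1`, the `m`-th term of the tail is `f m` for the real function
`f x = q^(c x) / [x:q]^(c+1)`, which is positive and strictly decreasing on `x > 0`, and
`-f` is the derivative of `F x = (q-1)/log q · (q^x/[x:q])^c / c`, which tends to `0` at infinity.
By the mean value theorem `f (m+1) < F m - F (m+1) < f m`; summing these telescoping bounds
over `m ≥ n`, resp. `m ≥ n+1`, squeezes the tail strictly between `F (n+1)` and `F n`. -/

open Set Topology

section IntegralComparison

variable {F f : ℝ → ℝ} {a : ℝ}

theorem sub_mem_Ioo_of_hasDerivAt_neg (hF : ∀ x, a < x → HasDerivAt F (-f x) x)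
    (hf : StrictAntiOn f (Ioi a)) {x : ℝ} (hx : a < x) :
    F x - F (x + 1) ∈ Ioo (f (x + 1)) (f x) := by
  obtain ⟨ξ, ⟨hxξ, hξx⟩, hslope⟩ :=
    exists_hasDerivAt_eq_slope F (fun y => -f y) (lt_add_one x)
      (fun y hy => (hF y (hx.trans_le hy.1)).continuousAt.continuousWithinAt)
      (fun y hy => hF y (hx.trans hy.1))
  have hξ : a < ξ := hx.trans hxξ
  have hdiff : F x - F (x + 1) = f ξ := by
    rw [add_sub_cancel_left, div_one] at hslope
    linarith
  rw [hdiff]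
  exact ⟨hf hξ (hx.trans (lt_add_one x)) hξx, hf hx hξ hxξ⟩

theorem hasSum_sub_of_hasDerivAt_neg (hF : ∀ x, a < x → HasDerivAt F (-f x) x)
    (hf : StrictAntiOn f (Ioi a)) (hf0 : ∀ x, a < x → 0 ≤ f x)
    (hlim : Tendsto F atTop (𝓝 0)) {s : ℝ} (hs : a < s) :
    HasSum (fun j : ℕ => F (s + j) - F (s + j + 1)) (F s) := by
  have hsj (j : ℕ) : a < s + j := hs.trans_le (le_add_of_nonneg_right j.cast_nonneg)
  have hstep_pos (j : ℕ) : 0 ≤ F (s + j) - F (s + j + 1) :=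
    (hf0 _ ((hsj j).trans (lt_add_one _))).trans
      (sub_mem_Ioo_of_hasDerivAt_neg hF hf (hsj j)).1.le
  rw [hasSum_iff_tendsto_nat_of_nonneg hstep_pos]
  have hpartial (N : ℕ) : ∑ j ∈ range N, (F (s + j) - F (s + j + 1)) = F s - F (s + N) := by
    simpa [add_assoc] using sum_range_sub' (fun j : ℕ => F (s + j)) N
  simp only [hpartial]
  simpa using tendsto_const_nhds.sub
    (hlim.comp (tendsto_atTop_add_const_left _ s tendsto_natCast_atTop_atTop))

theorem tsum_add_nat_mem_Ioo_of_hasDerivAt_neg (hF : ∀ x, a < x → HasDerivAt F (-f x) x)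
    (hf : StrictAntiOn f (Ioi a)) (hf0 : ∀ x, a < x → 0 ≤ f x)
    (hlim : Tendsto F atTop (𝓝 0)) {s : ℝ} (hs : a < s) :
    ∑' j : ℕ, f (s + 1 + j) ∈ Ioo (F (s + 1)) (F s) := by
  have hsj (j : ℕ) : a < s + j := hs.trans_le (le_add_of_nonneg_right j.cast_nonneg)
  have hs₁j (j : ℕ) : a < s + 1 + j := by linarith [hsj j]
  have htel := hasSum_sub_of_hasDerivAt_neg hF hf hf0 hlim hs
  have htel₁ := hasSum_sub_of_hasDerivAt_neg hF hf hf0 hlim (hs.trans (lt_add_one s))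
  have hlt (j : ℕ) : f (s + 1 + j) < F (s + j) - F (s + j + 1) := by
    simpa only [add_right_comm] using (sub_mem_Ioo_of_hasDerivAt_neg hF hf (hsj j)).1
  have hsum : Summable fun j : ℕ => f (s + 1 + j) :=
    htel.summable.of_nonneg_of_le (fun j => hf0 _ (hs₁j j)) fun j => (hlt j).le
  have hgt (j : ℕ) := (sub_mem_Ioo_of_hasDerivAt_neg hF hf (hs₁j j)).2
  constructor
  · rw [← htel₁.tsum_eq]
    exact htel₁.summable.tsum_lt_tsum (fun j => (hgt j).le) (hgt 0) hsum
  · rw [← htel.tsum_eq]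
    exact hsum.tsum_lt_tsum (fun j => (hlt j).le) (hlt 0) htel.summable

end IntegralComparison

section QNumber

noncomputable def qnum (q x : ℝ) : ℝ := (1 - q ^ x) / (1 - q)

noncomputable def qTerm (q : ℝ) (c : ℕ) (x : ℝ) : ℝ := (q ^ x) ^ c / qnum q x ^ (c + 1)

noncomputable def qBound (q : ℝ) (c : ℕ) (x : ℝ) : ℝ :=
  (q - 1) / Real.log q * (q ^ x / qnum q x) ^ c / c

variable {q : ℝ}

theorem qnum_natCast (q : ℝ) (m : ℕ) : qnum q m = qint q m := by
  simp [qnum, qint]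

theorem qnum_pos (hq0 : 0 < q) (hq1 : q < 1) {x : ℝ} (hx : 0 < x) : 0 < qnum q x :=
  div_pos (sub_pos.2 (Real.rpow_lt_one hq0.le hq1 hx)) (sub_pos.2 hq1)

theorem qTerm_pos (hq0 : 0 < q) (hq1 : q < 1) (c : ℕ) {x : ℝ} (hx : 0 < x) : 0 < qTerm q c x :=
  div_pos (pow_pos (Real.rpow_pos_of_pos hq0 x) c) (pow_pos (qnum_pos hq0 hq1 hx) _)

theorem strictAntiOn_qTerm (hq0 : 0 < q) (hq1 : q < 1) (c : ℕ) :
    StrictAntiOn (qTerm q c) (Ioi 0) := by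
  intro x hx y hy hxy
  have hqyx : q ^ y < q ^ x := Real.rpow_lt_rpow_of_exponent_gt hq0 hq1 hxy
  have hnum : qnum q x < qnum q y := div_lt_div_of_pos_right (by linarith) (sub_pos.2 hq1)
  exact div_lt_div₀' (pow_le_pow_left₀ (Real.rpow_pos_of_pos hq0 y).le hqyx.le c)
    (pow_lt_pow_left₀ hnum (qnum_pos hq0 hq1 hx).le (Nat.succ_ne_zero c))
    (pow_pos (Real.rpow_pos_of_pos hq0 x) c) (pow_pos (qnum_pos hq0 hq1 hx) _)

theorem hasDerivAt_qnum (hq0 : 0 < q) (x : ℝ) :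
    HasDerivAt (qnum q) (-(q ^ x * Real.log q) / (1 - q)) x :=
  ((Real.hasStrictDerivAt_const_rpow hq0 x).hasDerivAt.const_sub 1).div_const _

theorem hasDerivAt_qBound (hq0 : 0 < q) (hq1 : q < 1) {c : ℕ} (hc : c ≠ 0) {x : ℝ}
    (hx : 0 < x) : HasDerivAt (qBound q c) (-qTerm q c x) x := by
  have hq : 1 - q ≠ 0 := (sub_pos.2 hq1).ne'
  have hratio : HasDerivAt (fun y => q ^ y / qnum q y)
      (q ^ x * Real.log q / (1 - q) / qnum q x ^ 2) x := by
    refine ((Real.hasStrictDerivAt_const_rpow hq0 x).hasDerivAt.div (hasDerivAt_qnum hq0 x)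
      (qnum_pos hq0 hq1 hx).ne').congr_deriv ?_
    simp only [qnum]
    field_simp
    ring
  refine (((hratio.pow c).const_mul ((q - 1) / Real.log q)).div_const (c : ℝ)).congr_deriv ?_
  obtain ⟨d, rfl⟩ : ∃ d, c = d + 1 := ⟨c - 1, by omega⟩
  have hlog := (Real.log_neg hq0 hq1).ne
  simp only [qTerm, Nat.add_sub_cancel, div_pow]
  field_simp
  ring

theorem tendsto_qBound_atTop (hq0 : 0 < q) (hq1 : q < 1) {c : ℕ} (hc : c ≠ 0) :
    Tendsto (qBound q c) atTop (𝓝 0) := by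
  have hpow : Tendsto (fun x : ℝ => q ^ x) atTop (𝓝 0) :=
    tendsto_rpow_atTop_of_base_lt_one q (by linarith) hq1
  have hnum : Tendsto (qnum q) atTop (𝓝 ((1 - 0) / (1 - q))) :=
    (tendsto_const_nhds.sub hpow).div_const _
  rw [show (0 : ℝ) = (q - 1) / Real.log q * (0 / ((1 - 0) / (1 - q))) ^ c / c by
    simp [zero_pow hc]]
  exact (((hpow.div hnum (by simp; linarith)).pow c).const_mul _).div_const _

end QNumber

theorem qZeta_fin_one (q : ℝ) (k n : ℕ) :
    qZeta q (fun _ : Fin 1 => k) n =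
      ∑' j : ℕ, q ^ ((n + 1 + j) * (k - 1)) / qint q (n + 1 + j) ^ k := by
  let e : ℕ ≃ {m : Fin 1 → ℕ // StrictAnti m ∧ ∀ i, n < m i} :=
    { toFun := fun j => ⟨fun _ => n + 1 + j, Subsingleton.strictAnti _,
        fun _ => show n < n + 1 + j by omega⟩
      invFun := fun m => m.1 0 - (n + 1)
      left_inv := fun j => by simp
      right_inv := fun m => by
        ext i
        rw [Subsingleton.elim i 0]
        have := m.2.2 0
        simp only
        omega }
  rw [qZeta, ← e.tsum_eq]
  simp [e]

theorem stmt14 (k₁ n : ℕ) (hk : 2 ≤ k₁) (hn : 1 ≤ n) (q : ℝ)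
    (hq : q ∈ Set.Ioo (0:ℝ) 1) :
    (q - 1) / Real.log q * (q ^ (n + 1) / qint q (n + 1)) ^ (k₁ - 1) / ((k₁ : ℝ) - 1)
        < qZeta q (fun _ : Fin 1 => k₁) n ∧
    qZeta q (fun _ : Fin 1 => k₁) n
        < (q - 1) / Real.log q * (q ^ n / qint q n) ^ (k₁ - 1) / ((k₁ : ℝ) - 1) := by
  obtain ⟨hq0, hq1⟩ := hq
  obtain ⟨c, rfl⟩ : ∃ c, k₁ = c + 1 := ⟨k₁ - 1, by omega⟩
  have hc : c ≠ 0 := by omega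
  have hbounds := tsum_add_nat_mem_Ioo_of_hasDerivAt_neg
    (fun x hx => hasDerivAt_qBound hq0 hq1 hc hx) (strictAntiOn_qTerm hq0 hq1 c)
    (fun x hx => (qTerm_pos hq0 hq1 c hx).le) (tendsto_qBound_atTop hq0 hq1 hc)
    (s := n) (by exact_mod_cast hn)
  have hterm (m : ℕ) : q ^ (m * (c + 1 - 1)) / qint q m ^ (c + 1) = qTerm q c m := by
    simp [qTerm, qnum_natCast, pow_mul]
  have hbound (m : ℕ) :
      (q - 1) / Real.log q * (q ^ m / qint q m) ^ (c + 1 - 1) / ((c + 1 : ℕ) - 1) =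
        qBound q c m := by
    simp [qBound, qnum_natCast]
  rw [qZeta_fin_one, hbound, hbound]
  simp only [hterm]
  push_cast
  exact hbounds
end
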